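/- arXiv:0711.3386 — 14 statements merged into one kernel-verified Lean document; each statement's English description precedes it below -/
import Mathlib

section
/- Let a(n) and b(n) be nonzero polynomials over a field K of characteristic zero, and let k₀ be the largest natural number k such that gcd(a(n-1), b(n+k)) has positive degree (the dispersion of a(n-1) and b(n)). Define G_k(n) = gcd(b(n)b(n+1)···b(n+k-1), a(n-1)a(n-2)···a(n-k)). Then G_k(n) = G_{k₀+1}(n) for all k ≥ k₀+1; that is, the sequence G_1, G_2, ... stabilizes at G_{k₀+1}. -/
open Polynomial Finset

/-- Cancel a left factor coprime to the second argument in a normalized gcd. -/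
private theorem gcd_mul_right_cancel' {α : Type*} [CommRing α] [IsDomain α]
    [NormalizedGCDMonoid α] (x y c : α) (h : IsCoprime c y) :
    gcd (x * c) y = gcd x y := by
  have h1 : gcd x y ∣ gcd (x * c) y :=
    dvd_gcd ((gcd_dvd_left x y).trans (dvd_mul_right x c)) (gcd_dvd_right x y)
  have h2 : gcd (x * c) y ∣ gcd x y := by
    refine dvd_gcd ?_ (gcd_dvd_right _ _)
    have hc : IsCoprime (gcd (x * c) y) c :=
      ((h.symm.of_isCoprime_of_dvd_left (gcd_dvd_right _ _)))
    exact hc.dvd_of_dvd_mul_right (gcd_dvd_left _ _)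
  have := normalize_eq_normalize h2 h1
  rwa [_root_.normalize_gcd, _root_.normalize_gcd] at this

/-- Theorem 2.1: the GCD sequence `G_k` stabilizes at `G_{k₀+1}`, where `k₀` is the
dispersion of `a(n-1)` and `b(n)`. -/
theorem gcd_sequence_converges {K : Type*} [Field K] [CharZero K] [DecidableEq K]
    (a b : K[X]) (ha : a ≠ 0) (hb : b ≠ 0) (k₀ : ℕ)
    (hmax : 0 < (gcd (a.comp (X - 1)) (b.comp (X + C (k₀ : K)))).degree)
    (hcop : ∀ k : ℕ, k₀ < k → IsCoprime (a.comp (X - 1)) (b.comp (X + C (k : K))))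
    (G : ℕ → K[X])
    (hG : ∀ k, G k =
      gcd (∏ j ∈ range k, b.comp (X + C (j : K)))
          (∏ j ∈ range k, a.comp (X - C ((j : K) + 1)))) :
    ∀ k, k₀ + 1 ≤ k → G k = G (k₀ + 1) := by
  -- shift lemma: coprimality of shifted copies
  have hshift : ∀ m j : ℕ, k₀ < m + j →
      IsCoprime (a.comp (X - C ((j : K) + 1))) (b.comp (X + C (m : K))) := by
    intro m j h
    have H := hcop (m + j) (by omega)
    have H2 := H.map ((aeval (X - C (j : K)) : K[X] →ₐ[K] K[X]) : K[X] →+* K[X])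
    simp only [AlgHom.coe_toRingHom, ← comp_eq_aeval] at H2
    have e1 : (a.comp (X - 1)).comp (X - C (j : K)) = a.comp (X - C ((j : K) + 1)) := by
      rw [comp_assoc]; congr 1
      simp only [sub_comp, X_comp, one_comp, C_add, C_1]; ring
    have e2 : (b.comp (X + C ((m + j : ℕ) : K))).comp (X - C (j : K)) =
        b.comp (X + C (m : K)) := by
      rw [comp_assoc]; congr 1
      push_cast
      simp only [add_comp, sub_comp, X_comp, C_comp, C_add]; ring
    rwa [e1, e2] at H2
  intro k hk
  induction k, hk using Nat.le_induction with
  | base => rfl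
  | succ k hk ih =>
    rw [← ih, hG (k + 1), hG k, prod_range_succ, prod_range_succ]
    have hb' : IsCoprime (b.comp (X + C (k : K)))
        ((∏ j ∈ range k, a.comp (X - C ((j : K) + 1))) * a.comp (X - C ((k : K) + 1))) := by
      refine IsCoprime.mul_right ?_ ((hshift k k (by omega)).symm)
      exact (IsCoprime.prod_right fun j hj => (hshift k j (by omega)).symm)
    have ha' : IsCoprime (a.comp (X - C ((k : K) + 1)))
        (∏ j ∈ range k, b.comp (X + C (j : K))) :=
      IsCoprime.prod_right fun j hj => hshift j k (by omega)
    rw [gcd_mul_right_cancel' _ _ _ hb']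
    rw [gcd_comm, gcd_mul_right_cancel' _ _ _ ha', gcd_comm]
end

section
/- Let a, b, f, g be polynomials over a field K of characteristic zero with gcd(a,b) = 1 and gcd(f,g) = 1, g nonzero, satisfying a(n)g(n)f(n+1) - b(n)g(n+1)f(n) = b(n)g(n)g(n+1). Then g(n) divides b(n)·g(n+1) and g(n+1) divides a(n)·g(n). -/
open Polynomial

/-- From the cleared-denominator form of the Gosper equation, the denominator `g`
satisfies `g(n) ∣ b(n)g(n+1)` and `g(n+1) ∣ a(n)g(n)`. -/
theorem gosper_denominator_divisibility {K : Type*} [Field K] [CharZero K]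
    (a b f g : K[X]) (hg : g ≠ 0) (hab : IsCoprime a b) (hfg : IsCoprime f g)
    (heq : a * g * f.comp (X + 1) - b * g.comp (X + 1) * f = b * g * g.comp (X + 1)) :
    g ∣ b * g.comp (X + 1) ∧ g.comp (X + 1) ∣ a * g := by
  obtain ⟨u, v, huv⟩ := id hfg
  have hfg' : IsCoprime (f.comp (X + 1)) (g.comp (X + 1)) := by
    refine ⟨u.comp (X + 1), v.comp (X + 1), ?_⟩
    have := congrArg (fun p => p.comp (X + 1 : K[X])) huv
    simpa [add_comp, mul_comp] using this
  constructor
  · have h1 : g ∣ b * g.comp (X + 1) * f :=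
      ⟨a * f.comp (X + 1) - b * g.comp (X + 1), by linear_combination -heq⟩
    exact (hfg.symm).dvd_of_dvd_mul_right h1
  · have h2 : g.comp (X + 1) ∣ (a * g) * f.comp (X + 1) :=
      ⟨b * f + b * g, by linear_combination heq⟩
    exact (hfg'.symm).dvd_of_dvd_mul_right h2
end

section
/- Let g be a nonconstant polynomial over a field K of characteristic zero. Then for all sufficiently large k ∈ ℕ, gcd(g(n), g(n+k)) = 1, where g(n+k) denotes the shift of g by k. -/
/-!
Over an algebraic closure, a common root `a` of `g` and `g(X + k)` makes `a` and `a + k` both roots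
of `g`, so `k` is a difference of two roots of `g`. A nonzero polynomial has finitely many roots,
hence only finitely many naturals `k` arise (in characteristic zero `k ↦ (k : L)` is injective),
and for every larger `k` the two polynomials have no common root, i.e. are coprime.
-/

open Polynomial

theorem IsCoprime.gcd_eq_one {α : Type*} [CommRing α] [IsDomain α] [NormalizedGCDMonoid α]
    {a b : α} (h : IsCoprime a b) : gcd a b = 1 := by
  rw [← normalize_gcd, normalize_eq_one]
  exact gcd_isUnit_iff_isRelPrime.2 h.isRelPrime

theorem Polynomial.aeval_comp_X_add_C {R A : Type*} [CommSemiring R] [CommSemiring A]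
    [Algebra R A] (p : R[X]) (c : R) (a : A) :
    aeval a (p.comp (X + C c)) = aeval (a + algebraMap R A c) p := by
  simp [aeval_comp]

theorem Polynomial.finite_setOf_isRoot_add_natCast {R : Type*} [CommRing R] [IsDomain R]
    [CharZero R] {p : R[X]} (hp : p ≠ 0) :
    {k : ℕ | ∃ a, p.IsRoot a ∧ p.IsRoot (a + k)}.Finite := by
  have hroots := finite_setOfPred_isRoot hp
  refine ((hroots.image2 (fun a b => b - a) hroots).preimage Nat.cast_injective.injOn).subset ?_
  rintro k ⟨a, ha, hak⟩
  exact ⟨a, ha, a + k, hak, add_sub_cancel_left a k⟩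

/-- In characteristic zero, a polynomial is coprime to all of its sufficiently
large shifts: `gcd(g(n), g(n+k)) = 1` for all large `k`. -/
theorem coprime_large_shifts {K : Type*} [Field K] [CharZero K] [DecidableEq K]
    (g : K[X]) (hg : 0 < g.degree) :
    ∃ K₀ : ℕ, ∀ k : ℕ, K₀ ≤ k → gcd g (g.comp (X + C (k : K))) = 1 := by
  let L := AlgebraicClosure K
  have hfin := finite_setOf_isRoot_add_natCast
    (map_ne_zero (f := algebraMap K L) (ne_zero_of_degree_gt hg))
  obtain ⟨K₀, hK₀⟩ := Filter.eventually_atTop.1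
    (Nat.cofinite_eq_atTop ▸ hfin.eventually_cofinite_notMem)
  refine ⟨K₀, fun k hk => IsCoprime.gcd_eq_one ?_⟩
  rw [isCoprime_iff_aeval_ne_zero_of_isAlgClosed K L]
  intro a
  by_contra! ⟨ha, hak⟩
  rw [aeval_comp_X_add_C, map_natCast] at hak
  exact hK₀ k hk
    ⟨a, by rwa [IsRoot.def, eval_map_algebraMap], by rwa [IsRoot.def, eval_map_algebraMap]⟩
end

section
/- Let a, b, f, g be polynomials over a field K of characteristic zero with gcd(f,g) = 1, g nonzero, satisfying a(n)g(n)f(n+1) - b(n)g(n+1)f(n) = b(n)g(n)g(n+1). Let k₀ = dis(a(n-1), b(n)) and G_{k₀+1}(n) = gcd(∏_{j=0}^{k₀} b(n+j), ∏_{j=1}^{k₀+1} a(n-j)). Then g(n) divides G_{k₀+1}(n). -/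
open Polynomial Finset

/-!
Write `τ_r p = p(x + r)` (`Polynomial.taylor`). Since `f` and `g` are coprime, the Gosper equation
gives `g ∣ b · τ_1 g` and `g ∣ τ_{-1} a · τ_{-1} g`; iterating, `g ∣ (∏_{j<m} τ_j b) · τ_m g` and
`g ∣ (∏_{j<m} τ_{-j-1} a) · τ_{-m} g`. For `m = k₀ + 1` the shifts `τ_{±m} g` are coprime to `g`:
in an algebraic closure, roots `α` and `α + m` of `g` would extend to a maximal chain of roots with
step 1 from `α - t` to `α + m + s`, and the two divisibilities force `a(α - t - 1) = 0` and
`b(α + m + s) = 0`, so `a(x - 1)` and `b(x + m + s + t)` would share a root although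
`m + s + t > k₀`.
-/

theorem Set.Finite.exists_add_nat_mul_mem_and_notMem {L : Type*} [Field L] [CharZero L]
    {S : Set L} (hS : S.Finite) {α c : L} (hc : c ≠ 0) (hα : α ∈ S) :
    ∃ s : ℕ, α + s * c ∈ S ∧ α + (s + 1) * c ∉ S := by
  by_contra! h
  have hall : ∀ s : ℕ, α + s * c ∈ S := fun s => by
    induction s with
    | zero => simpa using hα
    | succ s ih => exact_mod_cast h s ih
  have hinj : Function.Injective fun s : ℕ => α + s * c := fun i j hij => by
    simpa [hc] using hij
  exact (Set.infinite_range_of_injective hinj).mono (Set.range_subset_iff.2 hall) hS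

namespace Polynomial

variable {R : Type*}

theorem aeval_taylor [CommSemiring R] {A : Type*} [CommSemiring A] [Algebra R A]
    (r : R) (p : R[X]) (x : A) : aeval x (taylor r p) = aeval (x + algebraMap R A r) p := by
  simp [taylor_apply, aeval_comp]

theorem dvd_prod_taylor_mul_taylor [CommSemiring R] {g B : R[X]} {c : R}
    (h : g ∣ B * taylor c g) (m : ℕ) :
    g ∣ (∏ j ∈ range m, taylor (j * c) B) * taylor (m * c) g := by
  induction m with
  | zero => simp
  | succ m ih =>
    have step := _root_.map_dvd (taylorAlgHom ((m : R) * c)) h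
    simp only [taylorAlgHom_apply, taylor_mul, taylor_taylor] at step
    calc g ∣ (∏ j ∈ range m, taylor (j * c) B) * taylor (m * c) g := ih
      _ ∣ (∏ j ∈ range m, taylor (j * c) B) * (taylor (m * c) B * taylor (m * c + c) g) :=
        mul_dvd_mul_left _ step
      _ = (∏ j ∈ range (m + 1), taylor (j * c) B) * taylor ((m + 1 : ℕ) * c) g := by
        rw [prod_range_succ]; push_cast; ring_nf

theorem _root_.IsCoprime.taylor [CommSemiring R] {p q : R[X]} (h : IsCoprime p q) (r : R) :
    IsCoprime (taylor r p) (taylor r q) :=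
  h.map (taylorAlgHom r).toRingHom

theorem isCoprime_taylor_neg_of_isCoprime_taylor [CommRing R] {p : R[X]} {r : R}
    (h : IsCoprime p (taylor r p)) : IsCoprime p (taylor (-r) p) := by
  simpa [taylor_taylor, taylor_zero] using (h.taylor (-r)).symm

theorem aeval_eq_zero_of_dvd_mul_taylor [CommSemiring R] {L : Type*} [CommRing L] [IsDomain L]
    [Algebra R L] {g B : R[X]} {c : R} (h : g ∣ B * taylor c g) {β : L}
    (hβ : aeval β g = 0) (hβc : aeval (β + algebraMap R L c) g ≠ 0) : aeval β B = 0 := by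
  obtain ⟨q, hq⟩ := h
  have := congrArg (aeval β) hq
  rw [map_mul, map_mul, hβ, zero_mul, aeval_taylor] at this
  exact (mul_eq_zero.1 this).resolve_right hβc

theorem isCoprime_taylor_natCast_of_dvd {K : Type*} [Field K] [CharZero K]
    {g A B : K[X]} (hg : g ≠ 0) (hB : g ∣ B * taylor 1 g) (hA : g ∣ A * taylor (-1) g)
    {k₀ : ℕ} (hcop : ∀ n : ℕ, k₀ < n → IsCoprime A (taylor (n : K) B)) {m : ℕ} (hm : k₀ < m) :
    IsCoprime g (taylor (m : K) g) := by
  refine (isCoprime_iff_aeval_ne_zero_of_isAlgClosed K (AlgebraicClosure K) _ _).2 fun α => ?_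
  by_contra! ⟨hα, hαm⟩
  rw [aeval_taylor, map_natCast] at hαm
  have hroots := rootSet_finite g (AlgebraicClosure K)
  obtain ⟨s, hs, hs'⟩ := hroots.exists_add_nat_mul_mem_and_notMem one_ne_zero
    ((mem_rootSet_of_ne hg).2 hαm)
  obtain ⟨t, ht, ht'⟩ := hroots.exists_add_nat_mul_mem_and_notMem (neg_ne_zero.2 one_ne_zero)
    ((mem_rootSet_of_ne hg).2 hα)
  simp only [mem_rootSet_of_ne hg] at hs hs' ht ht'
  have hBroot : aeval (α + m + s) B = 0 :=
    aeval_eq_zero_of_dvd_mul_taylor hB (by simpa using hs) (by simpa [add_assoc] using hs')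
  have hAroot : aeval (α - t) A = 0 :=
    aeval_eq_zero_of_dvd_mul_taylor hA (by simpa [sub_eq_add_neg] using ht)
      (by rw [map_neg, map_one, show α - t + -1 = α + (t + 1) * -1 by ring]; exact ht')
  have hdisp := (isCoprime_iff_aeval_ne_zero_of_isAlgClosed K (AlgebraicClosure K) _ _).1
    (hcop (m + s + t) (by omega)) (α - t)
  rw [aeval_taylor, map_natCast] at hdisp
  push_cast at hdisp
  rw [show α - t + (m + s + t) = α + m + s by ring] at hdisp
  simp [hBroot, hAroot] at hdisp

end Polynomial

section Gosper

variable {R : Type*} [CommRing R] {a b f g : R[X]}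

theorem dvd_mul_taylor_one_of_gosper (hfg : IsCoprime f g)
    (heq : a * g * taylor 1 f - b * taylor 1 g * f = b * g * taylor 1 g) :
    g ∣ b * taylor 1 g :=
  hfg.symm.dvd_of_dvd_mul_left ⟨a * taylor 1 f - b * taylor 1 g, by linear_combination -heq⟩

theorem dvd_taylor_neg_one_mul_of_gosper (hfg : IsCoprime f g)
    (heq : a * g * taylor 1 f - b * taylor 1 g * f = b * g * taylor 1 g) :
    g ∣ taylor (-1) a * taylor (-1) g := by
  have hshift : taylor 1 g ∣ a * g :=
    (hfg.taylor 1).symm.dvd_of_dvd_mul_left ⟨b * f + b * g, by linear_combination heq⟩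
  simpa [taylor_taylor, taylor_zero] using _root_.map_dvd (taylorAlgHom (-1 : R)) hshift

end Gosper

theorem denominator_divides_gcd_limit_general {K : Type*} [Field K] [CharZero K] [DecidableEq K]
    (a b f g : K[X]) (hg : g ≠ 0) (hfg : IsCoprime f g)
    (heq : a * g * f.comp (X + 1) - b * g.comp (X + 1) * f = b * g * g.comp (X + 1))
    (k₀ : ℕ)
    (hcop : ∀ k : ℕ, k₀ < k → IsCoprime (a.comp (X - 1)) (b.comp (X + C (k : K)))) :
    g ∣ gcd (∏ j ∈ range (k₀ + 1), b.comp (X + C (j : K)))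
            (∏ j ∈ range (k₀ + 1), a.comp (X - C ((j : K) + 1))) := by
  replace heq : a * g * taylor 1 f - b * taylor 1 g * f = b * g * taylor 1 g := by
    simpa [taylor_apply] using heq
  replace hcop : ∀ n : ℕ, k₀ < n → IsCoprime (taylor (-1) a) (taylor (n : K) b) := by
    simpa [taylor_apply, sub_eq_add_neg] using hcop
  have hB := dvd_mul_taylor_one_of_gosper hfg heq
  have hA := dvd_taylor_neg_one_mul_of_gosper hfg heq
  have hcoprime := isCoprime_taylor_natCast_of_dvd hg hB hA hcop (m := k₀ + 1) (by omega)
  have hprodB := dvd_prod_taylor_mul_taylor hB (k₀ + 1)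
  have hprodA := dvd_prod_taylor_mul_taylor hA (k₀ + 1)
  simp only [mul_one] at hprodB
  simp only [mul_neg_one] at hprodA
  refine dvd_gcd ?_ ?_
  · simpa only [taylor_apply] using hcoprime.dvd_of_dvd_mul_right hprodB
  · have hminus := isCoprime_taylor_neg_of_isCoprime_taylor hcoprime
    refine (hminus.dvd_of_dvd_mul_right hprodA).trans (dvd_of_eq (prod_congr rfl fun j _ => ?_))
    rw [taylor_taylor, taylor_apply, sub_eq_add_neg, ← C_neg]
    ring_nf

/-- Theorem 2.2: the denominator `g` of a reduced rational solution of the Gosper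
equation divides the limit `G_{k₀+1}` of the GCD sequence, where `k₀` is the
dispersion of `a(n-1)` and `b(n)`. -/
theorem denominator_divides_gcd_limit {K : Type*} [Field K] [CharZero K] [DecidableEq K]
    (a b f g : K[X]) (ha : a ≠ 0) (hb : b ≠ 0) (hg : g ≠ 0) (hfg : IsCoprime f g)
    (heq : a * g * f.comp (X + 1) - b * g.comp (X + 1) * f = b * g * g.comp (X + 1))
    (k₀ : ℕ)
    (hmax : 0 < (gcd (a.comp (X - 1)) (b.comp (X + C (k₀ : K)))).degree)
    (hcop : ∀ k : ℕ, k₀ < k → IsCoprime (a.comp (X - 1)) (b.comp (X + C (k : K)))) :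
    g ∣ gcd (∏ j ∈ range (k₀ + 1), b.comp (X + C (j : K)))
            (∏ j ∈ range (k₀ + 1), a.comp (X - C ((j : K) + 1))) :=
  denominator_divides_gcd_limit_general a b f g hg hfg heq k₀ hcop
end

section
/- Let p₀(n) and p_d(n) be nonzero polynomials over a field K of characteristic zero, and let N be the largest natural number k such that gcd(p_d(n-d), p₀(n+k)) has positive degree. Define G_k(n) = gcd(∏_{j=0}^{k-1} p₀(n+j), ∏_{j=0}^{k-1} p_d(n-d-j)). Then G_k(n) = G_{N+1}(n) for all k ≥ N+1. -/
/-!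
Splitting `∏_{j<k} = ∏_{j≤N} · ∏_{N<j<k}` in both products, every new factor `p₀(n+m)`
(resp. `p_d(n-d-j)`) is coprime to every factor `p_d(n-d-j)` (resp. `p₀(n+m)`) of the other
product: shifting by `j`, such a pair is coprime iff `p_d(n-d)` and `p₀(n+m+j)` are, and
`m + j > N`. Factors coprime to the other side cannot contribute to the gcd.
-/

open Polynomial Finset

theorem gcd_mul_mul_eq_gcd_of_isCoprime {R : Type*} [CommRing R] [NormalizedGCDMonoid R]
    {a a' b b' : R} (ha' : IsCoprime a' (b * b')) (hb' : IsCoprime b' (a * a')) :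
    gcd (a * a') (b * b') = gcd a b := by
  refine dvd_antisymm_of_normalize_eq (normalize_gcd _ _) (normalize_gcd _ _) ?_
    (gcd_dvd_gcd (dvd_mul_right a a') (dvd_mul_right b b'))
  refine dvd_gcd ?_ ?_
  · exact (ha'.symm.of_isCoprime_of_dvd_left (gcd_dvd_right _ _)).dvd_of_dvd_mul_right
      (gcd_dvd_left _ _)
  · exact (hb'.symm.of_isCoprime_of_dvd_left (gcd_dvd_left _ _)).dvd_of_dvd_mul_right
      (gcd_dvd_right _ _)

theorem IsCoprime.comp_X_sub_C_add_of_comp_X_add_C_add {R : Type*} [CommRing R] {p q : R[X]}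
    {d m j : R} (h : IsCoprime (p.comp (X - C d)) (q.comp (X + C (m + j)))) :
    IsCoprime (p.comp (X - C (d + j))) (q.comp (X + C m)) := by
  have h' := h.map (compRingHom (X - C j))
  simp only [coe_compRingHom_apply, comp_assoc, sub_comp, add_comp, X_comp, C_comp] at h'
  rwa [show X - C j - C d = X - C (d + j) by rw [C_add]; ring,
    show X - C j + C (m + j) = X + C m by rw [C_add]; ring] at h'

theorem gcd_sequence_converges_general_general {K : Type*} [Field K] [DecidableEq K]
    (p₀ pd : K[X]) (d : ℕ) (N : ℕ)
    (hcop : ∀ k : ℕ, N < k →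
      IsCoprime (pd.comp (X - C (d : K))) (p₀.comp (X + C (k : K))))
    (G : ℕ → K[X])
    (hG : ∀ k, G k =
      gcd (∏ j ∈ range k, p₀.comp (X + C (j : K)))
          (∏ j ∈ range k, pd.comp (X - C ((d : K) + (j : K))))) :
    ∀ k, N + 1 ≤ k → G k = G (N + 1) := by
  intro k hk
  set f : ℕ → K[X] := fun m => p₀.comp (X + C (m : K))
  set g : ℕ → K[X] := fun j => pd.comp (X - C ((d : K) + (j : K)))
  have hfg {m j : ℕ} (h : N < m + j) : IsCoprime (g j) (f m) :=
    IsCoprime.comp_X_sub_C_add_of_comp_X_add_C_add (by exact_mod_cast hcop (m + j) h)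
  have hf : IsCoprime (∏ m ∈ Ico (N + 1) k, f m) (∏ j ∈ range k, g j) :=
    IsCoprime.prod_left fun m hm => IsCoprime.prod_right fun j _ =>
      (hfg (by have := (mem_Ico.mp hm).1; omega)).symm
  have hg : IsCoprime (∏ j ∈ Ico (N + 1) k, g j) (∏ m ∈ range k, f m) :=
    IsCoprime.prod_left fun j hj => IsCoprime.prod_right fun m _ =>
      hfg (by have := (mem_Ico.mp hj).1; omega)
  rw [hG, hG, ← prod_range_mul_prod_Ico f hk, ← prod_range_mul_prod_Ico g hk]
  rw [← prod_range_mul_prod_Ico f hk] at hg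
  rw [← prod_range_mul_prod_Ico g hk] at hf
  exact gcd_mul_mul_eq_gcd_of_isCoprime hf hg

/-- Theorem 4.1: the GCD sequence
`G_k(n) = gcd(∏_{j<k} p₀(n+j), ∏_{j<k} p_d(n-d-j))` stabilizes at `G_{N+1}`,
where `N` is the dispersion of `p_d(n-d)` and `p₀(n)`. -/
theorem gcd_sequence_converges_general {K : Type*} [Field K] [CharZero K] [DecidableEq K]
    (p₀ pd : K[X]) (hp₀ : p₀ ≠ 0) (hpd : pd ≠ 0) (d : ℕ) (N : ℕ)
    (hmax : 0 < (gcd (pd.comp (X - C (d : K))) (p₀.comp (X + C (N : K)))).degree)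
    (hcop : ∀ k : ℕ, N < k →
      IsCoprime (pd.comp (X - C (d : K))) (p₀.comp (X + C (k : K))))
    (G : ℕ → K[X])
    (hG : ∀ k, G k =
      gcd (∏ j ∈ range k, p₀.comp (X + C (j : K)))
          (∏ j ∈ range k, pd.comp (X - C ((d : K) + (j : K))))) :
    ∀ k, N + 1 ≤ k → G k = G (N + 1) :=
  gcd_sequence_converges_general_general p₀ pd d N hcop G hG
end

section
/- Let f, g be coprime polynomials over a field K of characteristic zero, g nonzero, and let p₀, ..., p_d, p ∈ K[n] with p₀, p_d nonzero, such that ∑_{m=0}^{d} p_m(n)·f(n+m)·∏_{j≠m, 0≤j≤d} g(n+j) = p(n)·∏_{j=0}^{d} g(n+j). Then g(n) divides p₀(n)·lcm(g(n+1), g(n+2), ..., g(n+d)). -/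
/-!
Fix a prime `r` and write `v` for the `r`-adic valuation. Of the terms
`T m = p m · f(n+m) · ∏_{j ≠ m} g(n+j)` of the sum, `T 0` is the sum's right-hand side minus the
other terms, so `v (T 0)` is at least the valuation of the right-hand side or of a single `T m`
with `m ≠ 0`. Both contain `g(n) · ∏_{j ≠ 0, m} g(n+j)` as a factor, while
`T 0 = p 0 · f(n) · g(n+m) · ∏_{j ≠ 0, m} g(n+j)`; cancelling gives
`v (g(n)) ≤ v (p 0 · f(n) · g(n+m))`, and `g(n+m)` divides the lcm. As this holds for every `r`,
`g(n) ∣ p 0 · f(n) · lcm`, and `f` is coprime to `g`.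
-/

open Polynomial Finset

section Valuation

variable {R ι : Type*} [CommRing R] {r : R}

theorem emultiplicity_le_or_exists_emultiplicity_le_of_add_sum_eq {t : Finset ι} {y : ι → R}
    {x z : R} (h : x + ∑ m ∈ t, y m = z) :
    emultiplicity r z ≤ emultiplicity r x ∨ ∃ m ∈ t, emultiplicity r (y m) ≤ emultiplicity r x := by
  by_contra! hlt
  obtain ⟨hz, hy⟩ := hlt
  obtain ⟨k, hk⟩ := ENat.ne_top_iff_exists.mp hz.ne_top
  have hdvd : ∀ w, emultiplicity r x < emultiplicity r w → r ^ (k + 1) ∣ w := fun w hw =>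
    pow_dvd_of_le_emultiplicity (by rw [← hk] at hw; exact_mod_cast Order.add_one_le_of_lt hw)
  have hx : r ^ (k + 1) ∣ x := by
    rw [eq_sub_of_add_eq h]
    exact dvd_sub (hdvd z hz) (dvd_sum fun m hm => hdvd (y m) (hy m hm))
  have := le_emultiplicity_of_pow_dvd hx
  rw [← hk, Nat.cast_le] at this
  omega

variable [IsDomain R]

theorem emultiplicity_le_of_mul_le_mul_right [WfDvdMonoid R] (hr : Prime r) {x y z : R}
    (hz : z ≠ 0) (h : emultiplicity r (x * z) ≤ emultiplicity r (y * z)) :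
    emultiplicity r x ≤ emultiplicity r y := by
  rw [emultiplicity_mul hr, emultiplicity_mul hr] at h
  exact (ENat.add_le_add_iff_right (finiteMultiplicity_iff_emultiplicity_ne_top.mp
    (FiniteMultiplicity.of_not_isUnit hr.not_isUnit hz))).mp h

variable [DecidableEq ι]

theorem emultiplicity_le_of_sum_mul_prod_erase_eq [WfDvdMonoid R] (hr : Prime r)
    {s : Finset ι} {i : ι} (hi : i ∈ s) {a c : ι → R} {q b : R} (ha : ∀ j ∈ s, a j ≠ 0)
    (hb : ∀ m ∈ s.erase i, a m ∣ b)
    (heq : ∑ m ∈ s, c m * ∏ j ∈ s.erase m, a j = q * ∏ j ∈ s, a j) :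
    emultiplicity r (a i) ≤ emultiplicity r (c i * b) := by
  have hprod : ∀ t ⊆ s, ∏ j ∈ t, a j ≠ 0 := fun t ht =>
    prod_ne_zero_iff.mpr fun j hj => ha j (ht hj)
  rcases emultiplicity_le_or_exists_emultiplicity_le_of_add_sum_eq
    ((add_sum_erase s _ hi).trans heq) with hrhs | ⟨m, hm, hterm⟩
  · have : emultiplicity r (a i) ≤ emultiplicity r (c i) := by
      refine emultiplicity_le_of_mul_le_mul_right hr (hprod _ (erase_subset i s)) ?_
      rw [mul_prod_erase s a hi]
      exact (emultiplicity_le_emultiplicity_of_dvd_right (dvd_mul_left _ q)).trans hrhs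
    exact this.trans (emultiplicity_le_emultiplicity_of_dvd_right (dvd_mul_right _ _))
  · have him : i ∈ s.erase m := mem_erase.mpr ⟨fun h => (mem_erase.mp hm).1 h.symm, hi⟩
    have : emultiplicity r (a i) ≤ emultiplicity r (c i * a m) := by
      refine emultiplicity_le_of_mul_le_mul_right hr
        (hprod _ ((erase_subset i _).trans (erase_subset m s))) ?_
      rw [mul_prod_erase _ a him, mul_assoc, erase_right_comm, mul_prod_erase _ a hm]
      exact (emultiplicity_le_emultiplicity_of_dvd_right (dvd_mul_left _ _)).trans hterm
    exact this.trans (emultiplicity_le_emultiplicity_of_dvd_right (mul_dvd_mul_left _ (hb m hm)))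

theorem dvd_mul_of_sum_mul_prod_erase_eq [UniqueFactorizationMonoid R] {s : Finset ι} {i : ι}
    (hi : i ∈ s) {a c : ι → R} {q b : R} (ha : ∀ j ∈ s, a j ≠ 0)
    (hb : ∀ m ∈ s.erase i, a m ∣ b)
    (heq : ∑ m ∈ s, c m * ∏ j ∈ s.erase m, a j = q * ∏ j ∈ s, a j) :
    a i ∣ c i * b :=
  (UniqueFactorizationMonoid.dvd_iff_emultiplicity_le (ha i hi)).mpr fun _ hr =>
    emultiplicity_le_of_sum_mul_prod_erase_eq hr hi ha hb heq

end Valuation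

theorem denominator_divides_p0_lcm_general {K : Type*} [Field K] [DecidableEq K]
    (d : ℕ) (p : ℕ → K[X]) (q f g : K[X])
    (hg : g ≠ 0) (hfg : IsCoprime f g)
    (heq : ∑ m ∈ range (d + 1),
        p m * f.comp (X + C (m : K)) *
          ∏ j ∈ (range (d + 1)).erase m, g.comp (X + C (j : K))
      = q * ∏ j ∈ range (d + 1), g.comp (X + C (j : K))) :
    g ∣ p 0 * (Finset.Icc 1 d).lcm (fun j => g.comp (X + C (j : K))) := by
  have hdvd_f : g ∣ p 0 * f * (Icc 1 d).lcm (fun j => g.comp (X + C (j : K))) := by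
    have := dvd_mul_of_sum_mul_prod_erase_eq (mem_range.mpr d.succ_pos)
      (a := fun j => g.comp (X + C (j : K))) (c := fun m => p m * f.comp (X + C (m : K)))
      (b := (Icc 1 d).lcm (fun j => g.comp (X + C (j : K))))
      (fun _ _ => comp_X_add_C_ne_zero_iff.mpr hg)
      (fun m hm => dvd_lcm (by simp only [mem_erase, mem_range, mem_Icc] at hm ⊢; omega)) heq
    simpa only [Nat.cast_zero, map_zero, add_zero, comp_X] using this
  rw [mul_right_comm] at hdvd_f
  exact hfg.symm.dvd_of_dvd_mul_right hdvd_f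

/-- From the cleared-denominator form of the linear difference equation,
`g(n)` divides `p₀(n)·lcm(g(n+1), …, g(n+d))`. -/
theorem denominator_divides_p0_lcm {K : Type*} [Field K] [CharZero K] [DecidableEq K]
    (d : ℕ) (p : ℕ → K[X]) (q f g : K[X])
    (hp0 : p 0 ≠ 0) (hpd : p d ≠ 0) (hg : g ≠ 0) (hfg : IsCoprime f g)
    (heq : ∑ m ∈ range (d + 1),
        p m * f.comp (X + C (m : K)) *
          ∏ j ∈ (range (d + 1)).erase m, g.comp (X + C (j : K))
      = q * ∏ j ∈ range (d + 1), g.comp (X + C (j : K))) :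
    g ∣ p 0 * (Finset.Icc 1 d).lcm (fun j => g.comp (X + C (j : K))) :=
  denominator_divides_p0_lcm_general d p q f g hg hfg heq
end

section
/- Let g, p₀ be polynomials over a field K of characteristic zero, g nonzero, d ≥ 1, such that g(n) divides p₀(n)·lcm(g(n+1), ..., g(n+d)). Then for every k ≥ 1, g(n) divides (∏_{j=0}^{k-1} p₀(n+j))·lcm(g(n+k), g(n+k+1), ..., g(n+k+d-1)). -/
open Polynomial Finset

lemma comp_dvd_comp {K : Type*} [Field K] {a b : K[X]} (c : K) (hab : a ∣ b) :
    a.comp (X + C c) ∣ b.comp (X + C c) := by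
  obtain ⟨q, rfl⟩ := hab
  exact ⟨q.comp (X + C c), by rw [mul_comp]⟩

lemma lcm_comp_dvd {K : Type*} [Field K] [DecidableEq K] {ι : Type*} (s : Finset ι)
    (F : ι → K[X]) (c : K) :
    (s.lcm F).comp (X + C c) ∣ s.lcm (fun j => (F j).comp (X + C c)) := by
  have key : ∀ p q : K[X], p.comp (X + C c) ∣ q ↔ p ∣ q.comp (X - C c) := by
    intro p q
    constructor
    · intro hpq
      have := comp_dvd_comp (-c) hpq
      simpa [comp_assoc, sub_eq_add_neg] using this
    · intro hpq
      have := comp_dvd_comp c hpq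
      simpa [comp_assoc, sub_eq_add_neg] using this
  rw [key]
  apply Finset.lcm_dvd
  intro j hj
  rw [← key]
  exact Finset.dvd_lcm hj

/-- Iterating `g(n) ∣ p₀(n)·lcm(g(n+1), …, g(n+d))` gives, for every `k ≥ 1`,
`g(n) ∣ (∏_{j<k} p₀(n+j))·lcm(g(n+k), …, g(n+k+d-1))`. -/
theorem iterated_lcm_divisibility {K : Type*} [Field K] [CharZero K] [DecidableEq K]
    (d : ℕ) (hd : 1 ≤ d) (p₀ g : K[X]) (hg : g ≠ 0)
    (h : g ∣ p₀ * (Finset.Icc 1 d).lcm (fun j => g.comp (X + C (j : K)))) :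
    ∀ k : ℕ, 1 ≤ k →
      g ∣ (∏ j ∈ range k, p₀.comp (X + C (j : K))) *
        (Finset.Icc k (k + d - 1)).lcm (fun j => g.comp (X + C (j : K))) := by
  intro k hk
  induction k with
  | zero => omega
  | succ n ih =>
    rcases Nat.eq_zero_or_pos n with rfl | hn
    · have hdd : 0 + 1 + d - 1 = d := by omega
      rw [hdd]
      simpa using h
    · have ihn := ih hn
      have key : (Finset.Icc n (n + d - 1)).lcm (fun j => g.comp (X + C (j : K))) ∣
          p₀.comp (X + C (n : K)) *
            (Finset.Icc (n + 1) (n + 1 + d - 1)).lcm (fun j => g.comp (X + C (j : K))) := by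
        apply Finset.lcm_dvd
        intro j hj
        simp only [Finset.mem_Icc] at hj
        rcases eq_or_lt_of_le hj.1 with rfl | hlt
        · have h1 := comp_dvd_comp ((n : K)) h
          rw [mul_comp] at h1
          refine h1.trans (mul_dvd_mul_left _ ?_)
          refine (lcm_comp_dvd _ _ _).trans ?_
          apply Finset.lcm_dvd
          intro i hi
          simp only [Finset.mem_Icc] at hi
          have hco : (g.comp (X + C (i : K))).comp (X + C (n : K)) =
              g.comp (X + C ((i + n : ℕ) : K)) := by
            rw [comp_assoc]
            congr 1
            push_cast
            simp only [add_comp, X_comp, C_comp]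
            rw [add_assoc, ← C_add, add_comm (n : K)]
          rw [hco]
          exact Finset.dvd_lcm (by simp only [Finset.mem_Icc]; omega)
        · refine dvd_trans ?_ (dvd_mul_left _ _)
          apply Finset.dvd_lcm
          simp only [Finset.mem_Icc]
          omega
      refine ihn.trans ?_
      have := mul_dvd_mul_left (∏ j ∈ range n, p₀.comp (X + C (j : K))) key
      refine this.trans (dvd_of_eq ?_)
      rw [Finset.prod_range_succ]
      ring
end

section
/- Let g, p₀ be polynomials over a field K of characteristic zero, g nonzero, d ≥ 1, such that g(n) divides p₀(n)·lcm(g(n+1), ..., g(n+d)). Then for all sufficiently large k, g(n) divides ∏_{j=0}^{k-1} p₀(n+j). -/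
open Polynomial Finset

/-! Let `Q k` be the lcm of the translates `g(n+i)`, `k ≤ i ≤ k + d`. The hypothesis, translated
by `k`, gives `Q k ∣ p₀(n+k) · Q (k+1)`; since `g ∣ Q 0`, telescoping yields
`g ∣ (∏_{j<k} p₀(n+j)) · Q k` for every `k`. In characteristic zero `g` is coprime to its
translates by all large integers, hence to `Q k` for large `k`, and the factor `Q k` drops out. -/

open Filter in
/-- Any common root `a` of `f` and `taylor j g` in an algebraic closure makes `j` a difference
of two roots, `(a + j) - a`, and there are only finitely many such differences. -/
theorem Polynomial.eventually_isCoprime_taylor_natCast {K : Type*} [Field K] [CharZero K]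
    {f g : K[X]} (hf : f ≠ 0) (hg : g ≠ 0) :
    ∀ᶠ j : ℕ in atTop, IsCoprime f (taylor (j : K) g) := by
  classical
  let A := AlgebraicClosure K
  let rootDiffs : Finset A :=
    (g.aroots A).toFinset ×ˢ (f.aroots A).toFinset |>.image fun x => x.1 - x.2
  have hfinite : {j : ℕ | (j : A) ∈ rootDiffs}.Finite :=
    rootDiffs.finite_toSet.preimage Nat.cast_injective.injOn
  rw [← Nat.cofinite_eq_atTop]
  filter_upwards [hfinite.eventually_cofinite_notMem] with j hj
  rw [isCoprime_iff_aeval_ne_zero_of_isAlgClosed K A]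
  by_contra! ⟨a, hfa, hga⟩
  rw [taylor_apply, aeval_comp] at hga
  simp only [map_add, aeval_X, map_natCast] at hga
  refine hj (mem_image.2 ⟨(a + j, a), ?_, add_sub_cancel_left a _⟩)
  simp [hf, hg, hfa, hga]

theorem map_finset_lcm_dvd_iff {α ι F : Type*} [CommMonoidWithZero α]
    [NormalizedGCDMonoid α] [EquivLike F α α] [MulEquivClass F α α] (σ : F) {s : Finset ι}
    {f : ι → α} {b : α} :
    σ (s.lcm f) ∣ b ↔ ∀ i ∈ s, σ (f i) ∣ b := by
  obtain ⟨c, rfl⟩ := EquivLike.surjective σ b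
  simp only [map_dvd_iff, Finset.lcm_dvd_iff]

theorem IsCoprime.finset_lcm_right {α ι : Type*} [CommSemiring α]
    [NormalizedGCDMonoid α] {a : α} {s : Finset ι} {f : ι → α} (h : ∀ i ∈ s, IsCoprime a (f i)) :
    IsCoprime a (s.lcm f) :=
  (IsCoprime.prod_right h).of_isCoprime_of_dvd_right (lcm_dvd fun _ => dvd_prod_of_mem f)

theorem dvd_prod_range_mul_of_dvd_mul_succ {M : Type*} [CommMonoid M] {a : M} {p Q : ℕ → M}
    (h₀ : a ∣ Q 0) (hstep : ∀ k, Q k ∣ p k * Q (k + 1)) (k : ℕ) :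
    a ∣ (∏ j ∈ range k, p j) * Q k := by
  induction k with
  | zero => simpa using h₀
  | succ k ih =>
    rw [prod_range_succ, mul_assoc]
    exact ih.trans (mul_dvd_mul_left _ (hstep k))

section

variable {K : Type*} [Field K] [DecidableEq K] {d : ℕ} {p g : K[X]}

theorem taylor_dvd_mul_lcm_taylor (h : g ∣ p * (Icc 1 d).lcm fun j : ℕ => taylor (j : K) g)
    (m : ℕ) : taylor (m : K) g ∣
      taylor (m : K) p * (Icc (m + 1) (m + d)).lcm fun i : ℕ => taylor (i : K) g := by
  refine (map_dvd (taylorEquiv (m : K)) h).trans ?_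
  rw [map_mul]
  refine mul_dvd_mul_left _ ((map_finset_lcm_dvd_iff _).2 fun j hj => ?_)
  have hmj : m + j ∈ Icc (m + 1) (m + d) := by
    simp only [mem_Icc] at hj ⊢
    omega
  change taylor (m : K) (taylor (j : K) g) ∣ _
  rw [taylor_taylor, ← Nat.cast_add]
  exact dvd_lcm hmj

theorem lcm_taylor_Icc_dvd_mul_succ (h : g ∣ p * (Icc 1 d).lcm fun j : ℕ => taylor (j : K) g)
    (k : ℕ) : (Icc k (k + d)).lcm (fun i : ℕ => taylor (i : K) g) ∣
      taylor (k : K) p * (Icc (k + 1) (k + 1 + d)).lcm fun i : ℕ => taylor (i : K) g := by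
  refine lcm_dvd fun i hi => ?_
  rcases (mem_Icc.1 hi).1.eq_or_lt with rfl | hlt
  · exact (taylor_dvd_mul_lcm_taylor h k).trans
      (mul_dvd_mul_left _ (lcm_mono (Icc_subset_Icc_right (by omega))))
  · exact dvd_mul_of_dvd_right (dvd_lcm (by simp only [mem_Icc] at hi ⊢; omega)) _

end

theorem divides_p0_product_eventually_general {K : Type*} [Field K] [CharZero K] [DecidableEq K]
    (d : ℕ) (p₀ g : K[X]) (hg : g ≠ 0)
    (h : g ∣ p₀ * (Finset.Icc 1 d).lcm (fun j => g.comp (X + C (j : K)))) :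
    ∃ K₁ : ℕ, ∀ k : ℕ, K₁ ≤ k → g ∣ ∏ j ∈ range k, p₀.comp (X + C (j : K)) := by
  simp only [← taylor_apply] at h ⊢
  obtain ⟨N, hN⟩ := Filter.eventually_atTop.1 (eventually_isCoprime_taylor_natCast hg hg)
  set Q : ℕ → K[X] := fun k => (Icc k (k + d)).lcm fun i : ℕ => taylor (i : K) g
  have hQ₀ : g ∣ Q 0 := by
    simpa [Q] using dvd_lcm (f := fun i : ℕ => taylor (i : K) g) (left_mem_Icc.2 (Nat.zero_le _))
  refine ⟨N, fun k hk => ?_⟩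
  have hcop : IsCoprime g (Q k) :=
    IsCoprime.finset_lcm_right fun i hi => hN i (hk.trans (mem_Icc.1 hi).1)
  exact hcop.dvd_of_dvd_mul_right
    (dvd_prod_range_mul_of_dvd_mul_succ hQ₀ (lcm_taylor_Icc_dvd_mul_succ h) k)

/-- For all sufficiently large `k`, the denominator `g` divides the product
`∏_{j<k} p₀(n+j)`. -/
theorem divides_p0_product_eventually {K : Type*} [Field K] [CharZero K] [DecidableEq K]
    (d : ℕ) (hd : 1 ≤ d) (p₀ g : K[X]) (hg : g ≠ 0)
    (h : g ∣ p₀ * (Finset.Icc 1 d).lcm (fun j => g.comp (X + C (j : K)))) :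
    ∃ K₁ : ℕ, ∀ k : ℕ, K₁ ≤ k → g ∣ ∏ j ∈ range k, p₀.comp (X + C (j : K)) :=
  divides_p0_product_eventually_general d p₀ g hg h
end

section
/- Consider the linear difference equation ∑_{m=0}^{d} p_m(n) y(n+m) = p(n) with p₀, p_d nonzero polynomials over a field K of characteristic zero. Let N = dis(p_d(n-d), p₀(n)) ≥ 0 and G(n) = gcd(∏_{j=0}^{N} p₀(n+j), ∏_{j=0}^{N} p_d(n-d-j)). If y(n) = f(n)/g(n) is a rational solution in lowest terms (gcd(f,g)=1), then g(n) divides G(n). That is, G(n) is a universal denominator. -/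
/-!
Pass to the algebraic closure, fix a root `β` of `g` and let `v t` be the multiplicity of `β + t`
(`t : ℤ`) as a root of `g`. Comparing orders of vanishing at `β + t` in the cleared equation gives
`v t ≤ ord_{β+t} p₀ + max_{1 ≤ m ≤ d} v (t + m)`, and symmetrically
`v t ≤ ord_{β+t-d} p_d + max_{1 ≤ m ≤ d} v (t - m)`. Iterating these from the largest root `β + T`
and the smallest root `β - B` of `g` on the orbit gives `v 0 ≤ ∑_{i=0}^{T} ord_{β+i} p₀` and
`v 0 ≤ ∑_{i=0}^{B} ord_{β-i-d} p_d`. At the extreme roots the same inequalities force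
`p₀(β + T) = 0 = p_d(β - B - d)`, so `p_d(n - d)` and `p₀(n + T + B)` have a common root and the
dispersion bound gives `T + B ≤ N`.
-/

open Polynomial Finset

namespace Polynomial

variable {R : Type*} [CommRing R]

theorem rootMultiplicity_comp_X_add_C (h : R[X]) (a c : R) :
    (h.comp (X + C c)).rootMultiplicity a = h.rootMultiplicity (a + c) := by
  simpa using rootMultiplicity_comp_C_mul_X_add_C h 1 c a isUnit_one

theorem rootMultiplicity_comp_X_sub_C (h : R[X]) (a c : R) :
    (h.comp (X - C c)).rootMultiplicity a = h.rootMultiplicity (a - c) := by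
  simpa [sub_eq_add_neg] using rootMultiplicity_comp_X_add_C h a (-c)

theorem comp_X_sub_C_ne_zero {h : R[X]} (hh : h ≠ 0) (c : R) : h.comp (X - C c) ≠ 0 := by
  simpa [sub_eq_add_neg] using (comp_X_add_C_ne_zero_iff (t := -c)).2 hh

theorem le_of_isRoot_of_forall_isCoprime [Nontrivial R] {a b : R[X]} {c x : R} {N k : ℕ}
    (hcop : ∀ k : ℕ, N < k → IsCoprime (a.comp (X - C c)) (b.comp (X + C (k : R))))
    (ha : a.IsRoot (x - c)) (hb : b.IsRoot (x + k)) : k ≤ N := by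
  by_contra hk
  simpa [eval_comp, ha.eq_zero, hb.eq_zero] using
    aeval_ne_zero_of_isCoprime (hcop k (by omega)) x

section IsDomain

variable [IsDomain R]

theorem rootMultiplicity_prod {ι : Type*} {s : Finset ι} {f : ι → R[X]}
    (hf : ∏ i ∈ s, f i ≠ 0) (a : R) :
    (∏ i ∈ s, f i).rootMultiplicity a = ∑ i ∈ s, (f i).rootMultiplicity a := by
  classical
  rw [← count_roots, roots_prod f s hf, Multiset.count_bind]
  simp [count_roots]

theorem finite_setOf_isRoot_comp {ι : Type*} {g : R[X]} (hg : g ≠ 0) {σ : ι → R}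
    (hσ : Function.Injective σ) : {i | g.IsRoot (σ i)}.Finite :=
  (g.roots.finite_toSet.preimage hσ.injOn).subset fun _ hi => (mem_roots hg).2 hi

theorem exists_greatest_isRoot_comp {g : R[X]} (hg : g ≠ 0) {σ : ℤ → R}
    (hσ : Function.Injective σ) (h0 : g.IsRoot (σ 0)) :
    ∃ T, 0 ≤ T ∧ g.IsRoot (σ T) ∧ ∀ t, T < t → ¬ g.IsRoot (σ t) := by
  obtain ⟨b, hb⟩ := (finite_setOf_isRoot_comp hg hσ).bddAbove
  obtain ⟨T, hT, hmax⟩ := Int.exists_greatest_of_bdd ⟨b, fun t ht => hb ht⟩ ⟨0, h0⟩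
  exact ⟨T, hmax 0 h0, hT, fun t ht hroot => (hmax t hroot).not_gt ht⟩

end IsDomain

end Polynomial

theorem Finset.dvd_of_dvd_sum_of_dvd_erase {ι α : Type*} [CommRing α] [DecidableEq ι]
    {s : Finset ι} {T : ι → α} {c : α} {a : ι} (ha : a ∈ s) (hsum : c ∣ ∑ i ∈ s, T i)
    (hT : ∀ i ∈ s.erase a, c ∣ T i) : c ∣ T a := by
  rw [← add_sum_erase s T ha] at hsum
  exact (dvd_add_left (dvd_sum hT)).1 hsum

theorem le_sum_Icc_of_le_add_sup {ι : Type*} {s : Finset ι} {δ : ι → ℤ} (hδ : ∀ i ∈ s, 0 < δ i)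
    {u v : ℤ → ℕ} {T : ℤ} (hT : ∀ t, T < t → v t = 0)
    (h : ∀ t, v t ≤ u t + s.sup fun i => v (t + δ i)) (t : ℤ) :
    v t ≤ ∑ i ∈ Icc t T, u i := by
  suffices key : ∀ n : ℕ, ∀ t, T - t < n → v t ≤ ∑ i ∈ Icc t T, u i from
    key (T - t).toNat.succ t (by omega)
  intro n
  induction n with
  | zero => intro t ht; simp [hT t (by omega)]
  | succ n ih =>
    intro t ht
    rcases lt_or_ge T t with hlt | hle
    · simp [hT t hlt]
    calc v t ≤ u t + s.sup fun i => v (t + δ i) := h t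
      _ ≤ u t + ∑ i ∈ Ioc t T, u i := by
        gcongr
        refine Finset.sup_le fun i hi => (ih _ (by have := hδ i hi; omega)).trans ?_
        exact sum_le_sum_of_subset fun x hx => by
          simp only [mem_Icc, mem_Ioc] at hx ⊢; have := hδ i hi; omega
      _ = ∑ i ∈ Icc t T, u i := by rw [Icc_eq_cons_Ioc hle, sum_cons]

theorem sum_Icc_le_sum_range {u : ℤ → ℕ} {M : ℤ} {N : ℕ} (hM : M ≤ N) :
    ∑ i ∈ Icc 0 M, u i ≤ ∑ j ∈ range (N + 1), u j := by
  rw [← sum_image (g := ((↑) : ℕ → ℤ)) fun _ _ _ _ h => Nat.cast_injective h]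
  refine sum_le_sum_of_subset fun i hi => mem_image.2 ⟨i.toNat, ?_, ?_⟩
  all_goals simp only [mem_Icc, mem_range] at hi ⊢; omega

section ClearedEquation

variable {F : Type*} [Field F]

/-- `∑ₘ pₘ(n) y(n+m) = q(n)` for `y = f / g`, multiplied by `∏ⱼ g(n+j)`. -/
def IsClearedSolution (d : ℕ) (p : ℕ → F[X]) (q f g : F[X]) : Prop :=
  ∑ m ∈ range (d + 1), p m * f.comp (X + C (m : F)) *
      ∏ j ∈ (range (d + 1)).erase m, g.comp (X + C (j : F))
    = q * ∏ j ∈ range (d + 1), g.comp (X + C (j : F))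

namespace IsClearedSolution

variable {d : ℕ} {p : ℕ → F[X]} {q f g : F[X]}

theorem map {L : Type*} [Field L] (φ : F →+* L) (h : IsClearedSolution d p q f g) :
    IsClearedSolution d (fun m => (p m).map φ) (q.map φ) (f.map φ) (g.map φ) := by
  classical
  simpa [IsClearedSolution, Polynomial.map_sum, Polynomial.map_prod, Polynomial.map_comp]
    using congrArg (Polynomial.map φ) h

/- With `V j` the multiplicity of `x + j` in `g`, `S = ∑ V` and `M` the maximum of `V` off `a`,
every term `m ≠ a` and the right-hand side vanish to order `≥ S - M` at `x`, hence so does the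
term `m = a`, whose order is `ord_x (p a) + S - V a` as `f (x + a) ≠ 0`. -/
theorem rootMultiplicity_le_add_sup (h : IsClearedSolution d p q f g) (hfg : IsCoprime f g)
    (hg : g ≠ 0) {a : ℕ} (ha : a ≤ d) (hpa : p a ≠ 0) (x : F) :
    g.rootMultiplicity (x + a) ≤ (p a).rootMultiplicity x +
      ((range (d + 1)).erase a).sup fun m => g.rootMultiplicity (x + m) := by
  classical
  by_cases hroot : g.IsRoot (x + a)
  swap
  · simp [rootMultiplicity_eq_zero hroot]
  have hf : ¬ f.IsRoot (x + a) := by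
    simpa [hroot.eq_zero] using aeval_ne_zero_of_isCoprime hfg (x + a)
  set V : ℕ → ℕ := fun j => g.rootMultiplicity (x + j)
  set G : Finset ℕ → F[X] := fun s => ∏ j ∈ s, g.comp (X + C (j : F))
  have hG : ∀ s, G s ≠ 0 := fun s => prod_ne_zero_iff.2 fun j _ => comp_X_add_C_ne_zero_iff.2 hg
  have hGmult : ∀ s, (G s).rootMultiplicity x = ∑ j ∈ s, V j := fun s => by
    simp only [G, V, rootMultiplicity_prod (hG s), rootMultiplicity_comp_X_add_C]
  have hdvdG : ∀ s, (X - C x) ^ (∑ j ∈ s, V j) ∣ G s := fun s =>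
    hGmult s ▸ pow_rootMultiplicity_dvd _ _
  have hmem : a ∈ range (d + 1) := mem_range.2 (Nat.lt_succ_of_le ha)
  have hsplit := sum_erase_add _ V hmem
  set S := ∑ j ∈ range (d + 1), V j
  set M := ((range (d + 1)).erase a).sup V
  have hM : M ≤ ∑ j ∈ (range (d + 1)).erase a, V j :=
    Finset.sup_le fun m hm => single_le_sum (fun _ _ => Nat.zero_le _) hm
  have hdvd : (X - C x) ^ (S - M) ∣ p a * f.comp (X + C (a : F)) * G ((range (d + 1)).erase a) := by
    have h' : ∑ m ∈ range (d + 1), p m * f.comp (X + C (m : F)) * G ((range (d + 1)).erase m)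
        = q * G (range (d + 1)) := h
    refine dvd_of_dvd_sum_of_dvd_erase
      (T := fun m => p m * f.comp (X + C (m : F)) * G ((range (d + 1)).erase m))
      hmem (h' ▸ ?_) fun m hm => ?_
    · exact (pow_dvd_pow _ (Nat.sub_le _ _)).trans ((hdvdG _).mul_left q)
    · refine (pow_dvd_pow _ ?_).trans ((hdvdG _).mul_left _)
      have := sum_erase_add _ V (mem_of_mem_erase hm)
      have := le_sup (f := V) hm
      omega
  have hfa : f.comp (X + C (a : F)) ≠ 0 :=
    comp_X_add_C_ne_zero_iff.2 fun hf0 => hf (by simp [hf0])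
  have hle := (le_rootMultiplicity_iff (mul_ne_zero (mul_ne_zero hpa hfa) (hG _))).2 hdvd
  rw [rootMultiplicity_mul (mul_ne_zero (mul_ne_zero hpa hfa) (hG _)),
    rootMultiplicity_mul (mul_ne_zero hpa hfa), hGmult, rootMultiplicity_comp_X_add_C,
    rootMultiplicity_eq_zero hf] at hle
  change V a ≤ _ + M
  omega

theorem rootMultiplicity_add_le_sum_Icc (h : IsClearedSolution d p q f g) (hfg : IsCoprime f g)
    (hg : g ≠ 0) (hp0 : p 0 ≠ 0) {β : F} {T : ℤ} (hT : ∀ t : ℤ, T < t → ¬ g.IsRoot (β + t))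
    (t : ℤ) : g.rootMultiplicity (β + t) ≤ ∑ i ∈ Icc t T, (p 0).rootMultiplicity (β + i) := by
  refine le_sum_Icc_of_le_add_sup (s := (range (d + 1)).erase 0) (δ := fun m : ℕ => (m : ℤ))
    (fun m hm => by have := ne_of_mem_erase hm; omega)
    (fun t ht => rootMultiplicity_eq_zero (hT t ht)) (fun t => ?_) t
  simpa [add_assoc] using h.rootMultiplicity_le_add_sup hfg hg (Nat.zero_le d) hp0 (β + t)

theorem rootMultiplicity_sub_le_sum_Icc (h : IsClearedSolution d p q f g) (hfg : IsCoprime f g)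
    (hg : g ≠ 0) (hpd : p d ≠ 0) {β : F} {T : ℤ} (hT : ∀ t : ℤ, T < t → ¬ g.IsRoot (β - t))
    (t : ℤ) : g.rootMultiplicity (β - t) ≤ ∑ i ∈ Icc t T, (p d).rootMultiplicity (β - i - d) := by
  refine le_sum_Icc_of_le_add_sup (s := (range (d + 1)).erase d)
    (δ := fun m : ℕ => (d : ℤ) - m)
    (fun m hm => by have := ne_of_mem_erase hm; have := mem_range.1 (mem_of_mem_erase hm); omega)
    (fun t ht => rootMultiplicity_eq_zero (hT t ht)) (fun t => ?_) t
  have key := h.rootMultiplicity_le_add_sup hfg hg le_rfl hpd (β - t - d)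
  rw [sub_add_cancel] at key
  refine key.trans_eq (congrArg _ (sup_congr rfl fun m _ => ?_))
  push_cast
  ring_nf

variable [CharZero F]

theorem rootMultiplicity_le_rootMultiplicity_prod (h : IsClearedSolution d p q f g)
    (hfg : IsCoprime f g) (hg : g ≠ 0) (hp0 : p 0 ≠ 0) (hpd : p d ≠ 0) {N : ℕ}
    (hcop : ∀ k : ℕ, N < k →
      IsCoprime ((p d).comp (X - C (d : F))) ((p 0).comp (X + C (k : F)))) (β : F) :
    g.rootMultiplicity β ≤
        (∏ j ∈ range (N + 1), (p 0).comp (X + C (j : F))).rootMultiplicity β ∧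
      g.rootMultiplicity β ≤
        (∏ j ∈ range (N + 1), (p d).comp (X - C ((d : F) + (j : F)))).rootMultiplicity β := by
  by_cases hβ : g.IsRoot β
  swap
  · simp [rootMultiplicity_eq_zero hβ]
  have hinj : Function.Injective ((↑) : ℤ → F) := Int.cast_injective
  obtain ⟨T, hT0, hTroot, hT⟩ := exists_greatest_isRoot_comp hg
    ((add_right_injective β).comp hinj) (by simpa using hβ)
  obtain ⟨B, hB0, hBroot, hB⟩ := exists_greatest_isRoot_comp hg
    ((sub_right_injective (G := F) (b := β)).comp hinj) (by simpa using hβ)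
  have hfwd := h.rootMultiplicity_add_le_sum_Icc hfg hg hp0 hT
  have hbwd := h.rootMultiplicity_sub_le_sum_Icc hfg hg hpd hB
  have hp0root : (p 0).IsRoot (β + T) := by
    have := hfwd T
    rw [Icc_self, sum_singleton] at this
    exact (rootMultiplicity_pos hp0).1 (((rootMultiplicity_pos hg).2 hTroot).trans_le this)
  have hpdroot : (p d).IsRoot (β - B - d) := by
    have := hbwd B
    rw [Icc_self, sum_singleton] at this
    exact (rootMultiplicity_pos hpd).1 (((rootMultiplicity_pos hg).2 hBroot).trans_le this)
  have hTB : T + B ≤ N := by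
    have := le_of_isRoot_of_forall_isCoprime (k := (T + B).toNat) hcop hpdroot
      (by
        rwa [← Int.cast_natCast, Int.toNat_of_nonneg (by omega), Int.cast_add, sub_add_add_cancel])
    omega
  rw [rootMultiplicity_prod (prod_ne_zero_iff.2 fun j _ => comp_X_add_C_ne_zero_iff.2 hp0),
    rootMultiplicity_prod (prod_ne_zero_iff.2 fun j _ => comp_X_sub_C_ne_zero hpd _)]
  simp only [rootMultiplicity_comp_X_add_C, rootMultiplicity_comp_X_sub_C]
  constructor
  · simpa using (hfwd 0).trans (sum_Icc_le_sum_range (N := N) (by omega))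
  · calc g.rootMultiplicity β = g.rootMultiplicity (β - ((0 : ℤ) : F)) := by simp
      _ ≤ ∑ i ∈ Icc 0 B, (p d).rootMultiplicity (β - i - d) := hbwd 0
      _ ≤ ∑ j ∈ range (N + 1), (p d).rootMultiplicity (β - ((j : ℤ) : F) - d) :=
        sum_Icc_le_sum_range (by omega)
      _ = _ := sum_congr rfl fun j _ => by push_cast; ring_nf

theorem dvd_prod [IsAlgClosed F] (h : IsClearedSolution d p q f g)
    (hfg : IsCoprime f g) (hg : g ≠ 0) (hp0 : p 0 ≠ 0) (hpd : p d ≠ 0) {N : ℕ}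
    (hcop : ∀ k : ℕ, N < k →
      IsCoprime ((p d).comp (X - C (d : F))) ((p 0).comp (X + C (k : F)))) :
    g ∣ ∏ j ∈ range (N + 1), (p 0).comp (X + C (j : F)) ∧
      g ∣ ∏ j ∈ range (N + 1), (p d).comp (X - C ((d : F) + (j : F))) := by
  classical
  have key := h.rootMultiplicity_le_rootMultiplicity_prod hfg hg hp0 hpd hcop
  rw [IsAlgClosed.dvd_iff_roots_le_roots hg
      (prod_ne_zero_iff.2 fun j _ => comp_X_add_C_ne_zero_iff.2 hp0),
    IsAlgClosed.dvd_iff_roots_le_roots hg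
      (prod_ne_zero_iff.2 fun j _ => comp_X_sub_C_ne_zero hpd _)]
  simp only [Multiset.le_iff_count, count_roots]
  exact ⟨fun β => (key β).1, fun β => (key β).2⟩

end IsClearedSolution

end ClearedEquation

theorem universal_denominator_general {K : Type*} [Field K] [CharZero K] [DecidableEq K]
    (d : ℕ) (p : ℕ → K[X]) (q f g : K[X])
    (hp0 : p 0 ≠ 0) (hpd : p d ≠ 0) (hg : g ≠ 0) (hfg : IsCoprime f g)
    (N : ℕ)
    (hcop : ∀ k : ℕ, N < k →
      IsCoprime ((p d).comp (X - C (d : K))) ((p 0).comp (X + C (k : K))))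
    (heq : ∑ m ∈ range (d + 1),
        p m * f.comp (X + C (m : K)) *
          ∏ j ∈ (range (d + 1)).erase m, g.comp (X + C (j : K))
      = q * ∏ j ∈ range (d + 1), g.comp (X + C (j : K))) :
    g ∣ gcd (∏ j ∈ range (N + 1), (p 0).comp (X + C (j : K)))
            (∏ j ∈ range (N + 1), (p d).comp (X - C ((d : K) + (j : K)))) := by
  let φ := algebraMap K (AlgebraicClosure K)
  have : CharZero (AlgebraicClosure K) := charZero_of_injective_algebraMap φ.injective
  have hmap {h : K[X]} (hh : h ≠ 0) : h.map φ ≠ 0 := (Polynomial.map_ne_zero_iff φ.injective).2 hh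
  obtain ⟨h0, hd⟩ := IsClearedSolution.dvd_prod (IsClearedSolution.map φ heq)
    (hfg.map (mapRingHom φ)) (hmap hg) (hmap hp0) (hmap hpd) (N := N)
    fun k hk => by simpa [Polynomial.map_comp] using (hcop k hk).map (mapRingHom φ)
  refine dvd_gcd ?_ ?_ <;> rw [← map_dvd_map' φ]
  · simpa [Polynomial.map_prod, Polynomial.map_comp] using h0
  · simpa [Polynomial.map_prod, Polynomial.map_comp] using hd

/-- Theorem 4.2 (Abramov's universal denominator): if `y = f/g` in lowest terms
solves `∑ₘ pₘ(n) y(n+m) = q(n)`, then `g` divides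
`G(n) = gcd(∏_{j=0}^{N} p₀(n+j), ∏_{j=0}^{N} p_d(n-d-j))`, with `N` the
dispersion of `p_d(n-d)` and `p₀(n)`. -/
theorem universal_denominator {K : Type*} [Field K] [CharZero K] [DecidableEq K]
    (d : ℕ) (p : ℕ → K[X]) (q f g : K[X])
    (hp0 : p 0 ≠ 0) (hpd : p d ≠ 0) (hg : g ≠ 0) (hfg : IsCoprime f g)
    (N : ℕ)
    (hmax : 0 < (gcd ((p d).comp (X - C (d : K))) ((p 0).comp (X + C (N : K)))).degree)
    (hcop : ∀ k : ℕ, N < k →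
      IsCoprime ((p d).comp (X - C (d : K))) ((p 0).comp (X + C (k : K))))
    (heq : ∑ m ∈ range (d + 1),
        p m * f.comp (X + C (m : K)) *
          ∏ j ∈ (range (d + 1)).erase m, g.comp (X + C (j : K))
      = q * ∏ j ∈ range (d + 1), g.comp (X + C (j : K))) :
    g ∣ gcd (∏ j ∈ range (N + 1), (p 0).comp (X + C (j : K)))
            (∏ j ∈ range (N + 1), (p d).comp (X - C ((d : K) + (j : K)))) :=
  universal_denominator_general d p q f g hp0 hpd hg hfg N hcop heq
end

section
/- With notation as in Abramov's algorithm — A_{N+1}(n) = p_d(n-d), B_{N+1}(n) = p₀(n), and for i = N down to 0: d_i(n) = gcd(A_{i+1}(n), B_{i+1}(n+i)), A_i(n) = A_{i+1}(n)/d_i(n), B_i(n) = B_{i+1}(n)/d_i(n-i) — the product representation G(n) = ∏_{i=0}^{N} [d_i(n)]^{\underline{i+1}} equals the explicit formula gcd([p₀(n+N)]^{\underline{N+1}}, [p_d(n-d)]^{\underline{N+1}}), where [f(n)]^{\underline{k}} = f(n)f(n-1)···f(n-k+1). -/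
open Polynomial Finset

set_option linter.unusedSectionVars false

section AbramovHelpers

variable {K : Type*} [Field K] [DecidableEq K]

private lemma abr_dvd_comp {p q : K[X]} (h : p ∣ q) (r : K[X]) : p.comp r ∣ q.comp r := by
  obtain ⟨s, rfl⟩ := h; exact ⟨s.comp r, by rw [mul_comp]⟩

private lemma abr_isCoprime_comp {p q : K[X]} (h : IsCoprime p q) (r : K[X]) :
    IsCoprime (p.comp r) (q.comp r) := by
  simpa [comp] using h.map (eval₂RingHom C r)

private lemma abr_comp_add_sub (p : K[X]) (a b : K) :
    (p.comp (X + C a)).comp (X - C b) = p.comp (X + C (a - b)) := by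
  rw [comp_assoc]; congr 1; simp [C_sub]; ring

private lemma abr_comp_sub_sub (p : K[X]) (a b : K) :
    (p.comp (X - C a)).comp (X - C b) = p.comp (X - C (a + b)) := by
  rw [comp_assoc]; congr 1; simp [C_add]; ring

private lemma abr_comp_sub_add (p : K[X]) (a b : K) :
    (p.comp (X - C a)).comp (X + C b) = p.comp (X + C (b - a)) := by
  rw [comp_assoc]; congr 1; simp [C_sub]; ring

private lemma abr_comp_add_add (p : K[X]) (a b : K) :
    (p.comp (X + C a)).comp (X + C b) = p.comp (X + C (a + b)) := by
  rw [comp_assoc]; congr 1; simp [C_add]; ring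

private lemma abr_comp_sub_ne_zero {p : K[X]} (h : p ≠ 0) (a : K) : p.comp (X - C a) ≠ 0 := by
  intro h0
  apply h
  have := congrArg (fun q => q.comp (X + C a)) h0
  simpa [abr_comp_sub_add] using this

private lemma abr_gcd_eq_one {a b : K[X]} (h : IsCoprime a b) : gcd a b = 1 := by
  rw [← _root_.normalize_gcd, normalize_eq_one.mpr ((gcd_isUnit_iff a b).mpr h)]

end AbramovHelpers

/-- Equivalence of (3.6) and (3.7): the product form of Abramov's universal
denominator, `∏_{i=0}^{N} [dᵢ(n)]^{i+1 falling}`, equals the explicit formula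
`gcd([p₀(n+N)]^{N+1 falling}, [p_d(n-d)]^{N+1 falling})`. -/
theorem abramov_product_eq_explicit {K : Type*} [Field K] [CharZero K] [DecidableEq K]
    (p₀ pd : K[X]) (hp₀ : p₀ ≠ 0) (hpd : pd ≠ 0) (d N : ℕ)
    (hmax : 0 < (gcd (pd.comp (X - C (d : K))) (p₀.comp (X + C (N : K)))).degree)
    (hcop : ∀ k : ℕ, N < k →
      IsCoprime (pd.comp (X - C (d : K))) (p₀.comp (X + C (k : K))))
    (A B dd : ℕ → K[X])
    (hA : A (N + 1) = pd.comp (X - C (d : K)))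
    (hB : B (N + 1) = p₀)
    (hd : ∀ i ≤ N, dd i = gcd (A (i + 1)) ((B (i + 1)).comp (X + C (i : K))))
    (hAi : ∀ i ≤ N, A (i + 1) = dd i * A i)
    (hBi : ∀ i ≤ N, B (i + 1) = (dd i).comp (X - C (i : K)) * B i) :
    ∏ i ∈ range (N + 1), ∏ j ∈ range (i + 1), (dd i).comp (X - C (j : K))
      = gcd (∏ j ∈ range (N + 1), p₀.comp (X + C ((N : K) - (j : K))))
            (∏ j ∈ range (N + 1), pd.comp (X - C ((d : K) + (j : K)))) := by
  classical
  have hAN : A (N + 1) ≠ 0 := by rw [hA]; exact abr_comp_sub_ne_zero hpd _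
  have hBN : B (N + 1) ≠ 0 := by rw [hB]; exact hp₀
  -- nonvanishing down the chain
  have hne : ∀ j, j ≤ N + 1 → A (N + 1 - j) ≠ 0 ∧ B (N + 1 - j) ≠ 0 := by
    intro j
    induction j with
    | zero => intro _; simpa using ⟨hAN, hBN⟩
    | succ j ih =>
      intro hj
      obtain ⟨ha, hb⟩ := ih (by omega)
      have hiN : N - j ≤ N := by omega
      have h1 : N + 1 - j = (N - j) + 1 := by omega
      have h2 : N + 1 - (j + 1) = N - j := by omega
      rw [h1] at ha hb
      rw [h2]
      constructor
      · intro h0; rw [hAi _ hiN, h0, mul_zero] at ha; exact ha rfl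
      · intro h0; rw [hBi _ hiN, h0, mul_zero] at hb; exact hb rfl
  have hAne : ∀ i, i ≤ N + 1 → A i ≠ 0 := by
    intro i hi
    have := (hne (N + 1 - i) (by omega)).1
    rwa [show N + 1 - (N + 1 - i) = i by omega] at this
  have hBne : ∀ i, i ≤ N + 1 → B i ≠ 0 := by
    intro i hi
    have := (hne (N + 1 - i) (by omega)).2
    rwa [show N + 1 - (N + 1 - i) = i by omega] at this
  have hdne : ∀ i, i ≤ N → dd i ≠ 0 := by
    intro i hi h0
    exact hAne (i + 1) (by omega) (by rw [hAi i hi, h0, zero_mul])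
  have hdmon : ∀ i, i ≤ N → (dd i).Monic := by
    intro i hi
    rw [hd i hi, ← _root_.normalize_gcd]
    exact monic_normalize (by rw [← hd i hi]; exact hdne i hi)
  -- divisibility chains
  have hAdvd : ∀ s t, s ≤ t → t ≤ N + 1 → A s ∣ A t := by
    intro s t hst htN
    induction t with
    | zero => rw [Nat.le_zero.mp hst]
    | succ t ih =>
      rcases Nat.eq_or_lt_of_le hst with rfl | h
      · exact dvd_rfl
      · exact (ih (by omega) (by omega)).trans
          (by rw [hAi t (by omega)]; exact dvd_mul_left _ _)
  have hBdvd : ∀ s t, s ≤ t → t ≤ N + 1 → B s ∣ B t := by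
    intro s t hst htN
    induction t with
    | zero => rw [Nat.le_zero.mp hst]
    | succ t ih =>
      rcases Nat.eq_or_lt_of_le hst with rfl | h
      · exact dvd_rfl
      · exact (ih (by omega) (by omega)).trans
          (by rw [hBi t (by omega)]; exact dvd_mul_left _ _)
  -- key coprimality invariant
  have key0 : ∀ j, j ≤ N + 1 → ∀ k : ℕ, N + 1 - j ≤ k →
      IsCoprime (A (N + 1 - j)) ((B (N + 1 - j)).comp (X + C (k : K))) := by
    intro j
    induction j with
    | zero =>
      intro _ k hk
      simp only [Nat.sub_zero] at hk ⊢
      rw [hA, hB]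
      exact hcop k (by omega)
    | succ j ih =>
      intro hj k hk
      have hiN : N - j ≤ N := by omega
      have h1 : N + 1 - j = (N - j) + 1 := by omega
      have h2 : N + 1 - (j + 1) = N - j := by omega
      rw [h2] at hk ⊢
      set i := N - j with hidef
      have ihi : ∀ k : ℕ, i + 1 ≤ k →
          IsCoprime (A (i + 1)) ((B (i + 1)).comp (X + C (k : K))) := by
        intro k hk'
        have := ih (by omega) k (by omega)
        rwa [h1] at this
      rcases Nat.eq_or_lt_of_le hk with rfl | h
      · -- k = i
        have hcomp : (B (i + 1)).comp (X + C (i : K))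
            = dd i * (B i).comp (X + C (i : K)) := by
          rw [hBi i hiN, mul_comp, abr_comp_sub_add]
          simp
        have hg : dd i = dd i * gcd (A i) ((B i).comp (X + C (i : K))) := by
          conv_lhs => rw [hd i hiN, hAi i hiN, hcomp]
          rw [_root_.gcd_mul_left, (hdmon i hiN).normalize_eq_self]
        have hone : gcd (A i) ((B i).comp (X + C (i : K))) = 1 :=
          mul_left_cancel₀ (hdne i hiN) (by rw [mul_one, ← hg])
        exact (gcd_isUnit_iff _ _).mp (by rw [hone]; exact isUnit_one)
      · have hc := ihi k h
        have ha : A i ∣ A (i + 1) := by rw [hAi i hiN]; exact dvd_mul_left _ _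
        have hb : (B i).comp (X + C (k : K)) ∣ (B (i + 1)).comp (X + C (k : K)) :=
          abr_dvd_comp (by rw [hBi i hiN]; exact dvd_mul_left _ _) _
        exact (hc.of_isCoprime_of_dvd_left ha).of_isCoprime_of_dvd_right hb
  have key : ∀ i, i ≤ N + 1 → ∀ k : ℕ, i ≤ k →
      IsCoprime (A i) ((B i).comp (X + C (k : K))) := by
    intro i hi k hk
    have := key0 (N + 1 - i) (by omega) k (by omega)
    rwa [show N + 1 - (N + 1 - i) = i by omega] at this
  -- master coprimality
  have master : ∀ s t b c : ℕ, s ≤ N + 1 → t ≤ N + 1 → s ≤ b + c → t ≤ b + c →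
      IsCoprime ((A s).comp (X - C (b : K))) ((B t).comp (X + C (c : K))) := by
    intro s t b c hs ht hsbc htbc
    have hcast : ((b : K) + c) - b = (c : K) := by ring
    rcases le_total s t with h | h
    · have hc2 : IsCoprime (A s) ((B t).comp (X + C ((b + c : ℕ) : K))) :=
        (key t ht (b + c) htbc).of_isCoprime_of_dvd_left (hAdvd s t h ht)
      have := abr_isCoprime_comp hc2 (X - C (b : K))
      rwa [abr_comp_add_sub, Nat.cast_add, hcast] at this
    · have hc2 : IsCoprime (A s) ((B t).comp (X + C ((b + c : ℕ) : K))) :=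
        (key s hs (b + c) hsbc).of_isCoprime_of_dvd_right
          (abr_dvd_comp (hBdvd t s h hs) _)
      have := abr_isCoprime_comp hc2 (X - C (b : K))
      rwa [abr_comp_add_sub, Nat.cast_add, hcast] at this
  -- product expansions
  have hexp0 : ∀ j, j ≤ N + 1 →
      A (N + 1) = (∏ i ∈ Ico (N + 1 - j) (N + 1), dd i) * A (N + 1 - j) ∧
      B (N + 1) = (∏ i ∈ Ico (N + 1 - j) (N + 1), (dd i).comp (X - C (i : K)))
        * B (N + 1 - j) := by
    intro j
    induction j with
    | zero => intro _; simp
    | succ j ih =>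
      intro hj
      obtain ⟨ha, hb⟩ := ih (by omega)
      have hiN : N - j ≤ N := by omega
      have h1 : N + 1 - j = (N - j) + 1 := by omega
      have h2 : N + 1 - (j + 1) = N - j := by omega
      rw [h1] at ha hb
      rw [h2]
      set i := N - j with hidef
      constructor
      · rw [ha, hAi i hiN, Finset.prod_eq_prod_Ico_succ_bot (show i < N + 1 by omega)]
        ring
      · rw [hb, hBi i hiN, Finset.prod_eq_prod_Ico_succ_bot (show i < N + 1 by omega)]
        ring
  have hAexp : A (N + 1) = (∏ i ∈ range (N + 1), dd i) * A 0 := by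
    have := (hexp0 (N + 1) le_rfl).1
    rw [show N + 1 - (N + 1) = 0 by omega] at this
    rwa [range_eq_Ico]
  have hBexp : B (N + 1) = (∏ i ∈ range (N + 1), (dd i).comp (X - C (i : K))) * B 0 := by
    have := (hexp0 (N + 1) le_rfl).2
    rw [show N + 1 - (N + 1) = 0 by omega] at this
    rwa [range_eq_Ico]
  -- rewrite RHS products
  have hQQ : (∏ j ∈ range (N + 1), p₀.comp (X + C ((N : K) - (j : K)))) =
      ∏ a ∈ range (N + 1), (B (N + 1)).comp (X + C (a : K)) := by
    rw [hB, ← Finset.prod_range_reflect (fun a => p₀.comp (X + C (a : K))) (N + 1)]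
    apply Finset.prod_congr rfl
    intro j hj
    have hjN : j ≤ N := Nat.lt_succ_iff.mp (mem_range.mp hj)
    show p₀.comp (X + C ((N : K) - (j : K))) = p₀.comp (X + C ((N + 1 - 1 - j : ℕ) : K))
    congr 2
    have h1 : N + 1 - 1 - j = N - j := by omega
    rw [h1, Nat.cast_sub (Nat.lt_succ_iff.mp (mem_range.mp hj))]
  have hPP : (∏ j ∈ range (N + 1), pd.comp (X - C ((d : K) + (j : K)))) =
      ∏ b ∈ range (N + 1), (A (N + 1)).comp (X - C (b : K)) := by
    apply Finset.prod_congr rfl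
    intro j _
    rw [hA, abr_comp_sub_sub]
  -- splitting lemma for the dd-blocks
  have hsplit : ∀ i, i < N + 1 →
      (∏ a ∈ range (N + 1), (dd i).comp (X + C ((a : K) - (i : K)))) =
      (∏ j ∈ range (i + 1), (dd i).comp (X - C (j : K))) *
        ∏ a ∈ Ico (i + 1) (N + 1), (dd i).comp (X + C ((a : K) - (i : K))) := by
    intro i hi
    rw [range_eq_Ico, ← Finset.prod_Ico_consecutive _ (Nat.zero_le (i + 1)) hi]
    congr 1
    rw [← range_eq_Ico,
      ← Finset.prod_range_reflect (fun a => (dd i).comp (X + C ((a : K) - (i : K)))) (i + 1)]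
    apply Finset.prod_congr rfl
    intro j hj
    have hji : j ≤ i := Nat.lt_succ_iff.mp (mem_range.mp hj)
    show (dd i).comp (X + C (((i + 1 - 1 - j : ℕ) : K) - (i : K)))
        = (dd i).comp (X - C (j : K))
    have h1 : i + 1 - 1 - j = i - j := by omega
    rw [h1, Nat.cast_sub hji]
    congr 1
    rw [show (i : K) - (j : K) - (i : K) = -(j : K) by ring, map_neg, ← sub_eq_add_neg]
  have hsplit' : ∀ i, i < N + 1 →
      (∏ b ∈ range (N + 1), (dd i).comp (X - C (b : K))) =
      (∏ j ∈ range (i + 1), (dd i).comp (X - C (j : K))) *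
        ∏ b ∈ Ico (i + 1) (N + 1), (dd i).comp (X - C (b : K)) := by
    intro i hi
    rw [range_eq_Ico, ← Finset.prod_Ico_consecutive _ (Nat.zero_le (i + 1)) hi,
      ← range_eq_Ico]
  -- expansion of the two sides of the gcd
  have hQQ3 : (∏ a ∈ range (N + 1), (B (N + 1)).comp (X + C (a : K))) =
      (∏ i ∈ range (N + 1), ∏ j ∈ range (i + 1), (dd i).comp (X - C (j : K))) *
      ((∏ a ∈ range (N + 1), (B 0).comp (X + C (a : K))) *
        ∏ i ∈ range (N + 1), ∏ a ∈ Ico (i + 1) (N + 1),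
          (dd i).comp (X + C ((a : K) - (i : K)))) := by
    calc (∏ a ∈ range (N + 1), (B (N + 1)).comp (X + C (a : K)))
        = ∏ a ∈ range (N + 1),
            ((∏ i ∈ range (N + 1), (dd i).comp (X + C ((a : K) - (i : K)))) *
              (B 0).comp (X + C (a : K))) := by
          apply Finset.prod_congr rfl
          intro a _
          rw [hBexp, mul_comp, Polynomial.prod_comp]
          congr 1
          apply Finset.prod_congr rfl
          intro i _
          rw [abr_comp_sub_add]
      _ = (∏ a ∈ range (N + 1), ∏ i ∈ range (N + 1),
              (dd i).comp (X + C ((a : K) - (i : K)))) *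
            ∏ a ∈ range (N + 1), (B 0).comp (X + C (a : K)) := by
          rw [Finset.prod_mul_distrib]
      _ = (∏ i ∈ range (N + 1), ∏ a ∈ range (N + 1),
              (dd i).comp (X + C ((a : K) - (i : K)))) *
            ∏ a ∈ range (N + 1), (B 0).comp (X + C (a : K)) := by
          rw [Finset.prod_comm]
      _ = ((∏ i ∈ range (N + 1), ∏ j ∈ range (i + 1), (dd i).comp (X - C (j : K))) *
            ∏ i ∈ range (N + 1), ∏ a ∈ Ico (i + 1) (N + 1),
              (dd i).comp (X + C ((a : K) - (i : K)))) *
            ∏ a ∈ range (N + 1), (B 0).comp (X + C (a : K)) := by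
          congr 1
          rw [← Finset.prod_mul_distrib]
          apply Finset.prod_congr rfl
          intro i hi
          exact hsplit i (mem_range.mp hi)
      _ = _ := by ring
  have hPP3 : (∏ b ∈ range (N + 1), (A (N + 1)).comp (X - C (b : K))) =
      (∏ i ∈ range (N + 1), ∏ j ∈ range (i + 1), (dd i).comp (X - C (j : K))) *
      ((∏ b ∈ range (N + 1), (A 0).comp (X - C (b : K))) *
        ∏ i ∈ range (N + 1), ∏ b ∈ Ico (i + 1) (N + 1),
          (dd i).comp (X - C (b : K))) := by
    calc (∏ b ∈ range (N + 1), (A (N + 1)).comp (X - C (b : K)))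
        = ∏ b ∈ range (N + 1),
            ((∏ i ∈ range (N + 1), (dd i).comp (X - C (b : K))) *
              (A 0).comp (X - C (b : K))) := by
          apply Finset.prod_congr rfl
          intro b _
          rw [hAexp, mul_comp, Polynomial.prod_comp]
      _ = (∏ b ∈ range (N + 1), ∏ i ∈ range (N + 1), (dd i).comp (X - C (b : K))) *
            ∏ b ∈ range (N + 1), (A 0).comp (X - C (b : K)) := by
          rw [Finset.prod_mul_distrib]
      _ = (∏ i ∈ range (N + 1), ∏ b ∈ range (N + 1), (dd i).comp (X - C (b : K))) *
            ∏ b ∈ range (N + 1), (A 0).comp (X - C (b : K)) := by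
          rw [Finset.prod_comm]
      _ = ((∏ i ∈ range (N + 1), ∏ j ∈ range (i + 1), (dd i).comp (X - C (j : K))) *
            ∏ i ∈ range (N + 1), ∏ b ∈ Ico (i + 1) (N + 1),
              (dd i).comp (X - C (b : K))) *
            ∏ b ∈ range (N + 1), (A 0).comp (X - C (b : K)) := by
          congr 1
          rw [← Finset.prod_mul_distrib]
          apply Finset.prod_congr rfl
          intro i hi
          exact hsplit' i (mem_range.mp hi)
      _ = _ := by ring
  -- the two complementary parts are coprime
  have hUV : IsCoprime
      ((∏ a ∈ range (N + 1), (B 0).comp (X + C (a : K))) *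
        ∏ i ∈ range (N + 1), ∏ a ∈ Ico (i + 1) (N + 1),
          (dd i).comp (X + C ((a : K) - (i : K))))
      ((∏ b ∈ range (N + 1), (A 0).comp (X - C (b : K))) *
        ∏ i ∈ range (N + 1), ∏ b ∈ Ico (i + 1) (N + 1),
          (dd i).comp (X - C (b : K))) := by
    apply IsCoprime.mul_left
    · apply IsCoprime.prod_left
      intro a _
      apply IsCoprime.mul_right
      · apply IsCoprime.prod_right
        intro b _
        exact (master 0 0 b a (by omega) (by omega) (by omega) (by omega)).symm
      · apply IsCoprime.prod_right
        intro i' hi'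
        apply IsCoprime.prod_right
        intro b' hb'
        have hi'N : i' ≤ N := Nat.lt_succ_iff.mp (mem_range.mp hi')
        obtain ⟨hb'1, hb'2⟩ := mem_Ico.mp hb'
        have hm := master (i' + 1) 0 b' a (by omega) (by omega) (by omega) (by omega)
        have hdvd : (dd i').comp (X - C (b' : K)) ∣ (A (i' + 1)).comp (X - C (b' : K)) :=
          abr_dvd_comp (by rw [hAi i' hi'N]; exact dvd_mul_right _ _) _
        exact (hm.of_isCoprime_of_dvd_left hdvd).symm
    · apply IsCoprime.prod_left
      intro i hi
      apply IsCoprime.prod_left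
      intro a ha
      have hiN : i ≤ N := Nat.lt_succ_iff.mp (mem_range.mp hi)
      obtain ⟨ha1, ha2⟩ := mem_Ico.mp ha
      have hudvd : (dd i).comp (X + C ((a : K) - (i : K)))
          ∣ (B (i + 1)).comp (X + C (a : K)) := by
        have h1 : dd i ∣ (B (i + 1)).comp (X + C (i : K)) := by
          rw [hd i hiN]; exact gcd_dvd_right _ _
        have := abr_dvd_comp h1 (X + C ((a : K) - (i : K)))
        rwa [abr_comp_add_add, show (i : K) + ((a : K) - (i : K)) = (a : K) by ring] at this
      apply IsCoprime.mul_right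
      · apply IsCoprime.prod_right
        intro b _
        have hm := master 0 (i + 1) b a (by omega) (by omega) (by omega) (by omega)
        exact (hm.of_isCoprime_of_dvd_right hudvd).symm
      · apply IsCoprime.prod_right
        intro i' hi'
        apply IsCoprime.prod_right
        intro b' hb'
        have hi'N : i' ≤ N := Nat.lt_succ_iff.mp (mem_range.mp hi')
        obtain ⟨hb'1, hb'2⟩ := mem_Ico.mp hb'
        have hm := master (i' + 1) (i + 1) b' a (by omega) (by omega) (by omega) (by omega)
        have hdvd : (dd i').comp (X - C (b' : K)) ∣ (A (i' + 1)).comp (X - C (b' : K)) :=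
          abr_dvd_comp (by rw [hAi i' hi'N]; exact dvd_mul_right _ _) _
        exact ((hm.of_isCoprime_of_dvd_left hdvd).of_isCoprime_of_dvd_right hudvd).symm
  -- G is monic
  have hGmon : (∏ i ∈ range (N + 1), ∏ j ∈ range (i + 1),
      (dd i).comp (X - C (j : K))).Monic := by
    apply monic_prod_of_monic
    intro i hi
    apply monic_prod_of_monic
    intro j _
    exact (hdmon i (Nat.lt_succ_iff.mp (mem_range.mp hi))).comp_X_sub_C _
  rw [hQQ, hPP, hQQ3, hPP3, _root_.gcd_mul_left, hGmon.normalize_eq_self,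
    abr_gcd_eq_one hUV, mul_one]
end

section
/- With A_i, B_i, d_i defined by Abramov's algorithm (A_{N+1}(n) = p_d(n-d), B_{N+1}(n) = p₀(n), d_i(n) = gcd(A_{i+1}(n), B_{i+1}(n+i)), A_i = A_{i+1}/d_i(n), B_i(n) = B_{i+1}(n)/d_i(n-i)), for all 0 ≤ i ≤ N+1 and all k > N, gcd(A_i(n), B_i(n+k)) = 1. -/
open Polynomial Finset

/-- (3.8): for every stage `i ≤ N+1` of Abramov's algorithm and every `k > N`,
`gcd(Aᵢ(n), Bᵢ(n+k)) = 1`. -/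
theorem abramov_coprime_beyond_dispersion {K : Type*} [Field K] [CharZero K] [DecidableEq K]
    (p₀ pd : K[X]) (hp₀ : p₀ ≠ 0) (hpd : pd ≠ 0) (d N : ℕ)
    (hcop : ∀ k : ℕ, N < k →
      IsCoprime (pd.comp (X - C (d : K))) (p₀.comp (X + C (k : K))))
    (A B dd : ℕ → K[X])
    (hA : A (N + 1) = pd.comp (X - C (d : K)))
    (hB : B (N + 1) = p₀)
    (hd : ∀ i ≤ N, dd i = gcd (A (i + 1)) ((B (i + 1)).comp (X + C (i : K))))
    (hAi : ∀ i ≤ N, A (i + 1) = dd i * A i)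
    (hBi : ∀ i ≤ N, B (i + 1) = (dd i).comp (X - C (i : K)) * B i) :
    ∀ i ≤ N + 1, ∀ k : ℕ, N < k → IsCoprime (A i) ((B i).comp (X + C (k : K))) := by
  have step : ∀ i ≤ N, (∀ k : ℕ, N < k → IsCoprime (A (i+1)) ((B (i+1)).comp (X + C (k:K)))) →
      ∀ k : ℕ, N < k → IsCoprime (A i) ((B i).comp (X + C (k:K))) := by
    intro i hi ih k hk
    have h1 : A i ∣ A (i+1) := ⟨dd i, by rw [hAi i hi]; ring⟩
    have h2 : (B i).comp (X + C (k:K)) ∣ (B (i+1)).comp (X + C (k:K)) := by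
      rw [hBi i hi, mul_comp]
      exact Dvd.intro_left _ rfl
    exact ((ih k hk).of_isCoprime_of_dvd_left h1).of_isCoprime_of_dvd_right h2
  have main : ∀ j, j ≤ N + 1 → ∀ k : ℕ, N < k →
      IsCoprime (A (N + 1 - j)) ((B (N + 1 - j)).comp (X + C (k:K))) := by
    intro j
    induction j with
    | zero => intro _ k hk; simpa [hA, hB] using hcop k hk
    | succ j ih =>
      intro hj k hk
      have hj' : j ≤ N + 1 := Nat.le_of_succ_le hj
      have heq : N + 1 - j = (N + 1 - (j+1)) + 1 := by omega
      have hle : N + 1 - (j+1) ≤ N := by omega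
      exact step _ hle (fun k hk => by rw [← heq]; exact ih hj' k hk) k hk
  intro i hi k hk
  have hi' : i = N + 1 - (N + 1 - i) := by omega
  rw [hi']
  exact main _ (by omega) k hk
end

section
/- With A_i, B_i, d_i defined by Abramov's algorithm, for all 0 ≤ i ≤ N and all 0 ≤ j ≤ i, gcd(A_j(n), B_j(n+i)) = 1. -/
open Polynomial Finset

/-- (3.9): after stage `i` of Abramov's algorithm, for all `j ≤ i ≤ N`,
`gcd(Aⱼ(n), Bⱼ(n+i)) = 1`. -/
theorem abramov_coprime_within {K : Type*} [Field K] [CharZero K] [DecidableEq K]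
    (p₀ pd : K[X]) (hp₀ : p₀ ≠ 0) (hpd : pd ≠ 0) (d N : ℕ)
    (hcop : ∀ k : ℕ, N < k →
      IsCoprime (pd.comp (X - C (d : K))) (p₀.comp (X + C (k : K))))
    (A B dd : ℕ → K[X])
    (hA : A (N + 1) = pd.comp (X - C (d : K)))
    (hB : B (N + 1) = p₀)
    (hd : ∀ i ≤ N, dd i = gcd (A (i + 1)) ((B (i + 1)).comp (X + C (i : K))))
    (hAi : ∀ i ≤ N, A (i + 1) = dd i * A i)
    (hBi : ∀ i ≤ N, B (i + 1) = (dd i).comp (X - C (i : K)) * B i) :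
    ∀ i ≤ N, ∀ j ≤ i, IsCoprime (A j) ((B j).comp (X + C (i : K))) := by
  -- divisibility chains
  have hAdvd : ∀ j i, j ≤ i → i ≤ N + 1 → A j ∣ A i := by
    intro j i hji hiN
    induction i with
    | zero => simpa [Nat.le_zero.mp hji] using dvd_refl (A 0)
    | succ k ih =>
      rcases Nat.lt_or_ge j (k + 1) with h | h
      · have h1 : A j ∣ A k := ih (Nat.lt_succ_iff.mp h) (by omega)
        rw [hAi k (by omega)]
        exact h1.mul_left _
      · have : j = k + 1 := le_antisymm hji h
        subst this; exact dvd_refl _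
  have hBdvd : ∀ j i, j ≤ i → i ≤ N + 1 → B j ∣ B i := by
    intro j i hji hiN
    induction i with
    | zero => simpa [Nat.le_zero.mp hji] using dvd_refl (B 0)
    | succ k ih =>
      rcases Nat.lt_or_ge j (k + 1) with h | h
      · have h1 : B j ∣ B k := ih (Nat.lt_succ_iff.mp h) (by omega)
        rw [hBi k (by omega)]
        exact h1.mul_left _
      · have : j = k + 1 := le_antisymm hji h
        subst this; exact dvd_refl _
  -- A (N+1) ≠ 0
  have hAN : A (N + 1) ≠ 0 := by
    rw [hA]
    intro h
    have : (pd.comp (X - C (d : K))).comp (X + C (d : K)) = 0 := by rw [h, zero_comp]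
    rw [comp_assoc, sub_comp, X_comp, C_comp, add_sub_cancel_right, comp_X] at this
    exact hpd this
  have hAne : ∀ i, i ≤ N + 1 → A i ≠ 0 := by
    intro i hi h0
    exact hAN (zero_dvd_iff.mp (h0 ▸ hAdvd i (N + 1) hi le_rfl))
  -- the key coprimality at level i
  have key : ∀ i ≤ N, IsCoprime (A i) ((B i).comp (X + C (i : K))) := by
    intro i hi
    have hdd0 : dd i ≠ 0 := by
      intro h
      exact hAne (i + 1) (by omega) (by simpa [h] using hAi i hi)
    have hcomp : (B (i + 1)).comp (X + C (i : K)) =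
        dd i * (B i).comp (X + C (i : K)) := by
      rw [hBi i hi, mul_comp, comp_assoc, sub_comp, X_comp, C_comp, add_sub_cancel_right,
        comp_X]
    have hnorm : normalize (dd i) = dd i := by
      rw [hd i hi]; exact normalize_gcd (α := K[X]) _ _
    have hgcd : dd i = dd i * gcd (A i) ((B i).comp (X + C (i : K))) := by
      conv_lhs => rw [hd i hi, hAi i hi, hcomp]
      rw [_root_.gcd_mul_left, hnorm]
    have hone : gcd (A i) ((B i).comp (X + C (i : K))) = 1 :=
      mul_left_cancel₀ hdd0 (by rw [mul_one, ← hgcd])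
    exact (gcd_isUnit_iff _ _).mp (hone ▸ isUnit_one)
  -- conclude
  intro i hi j hj
  have h1 := key i hi
  have h2 : A j ∣ A i := hAdvd j i hj (by omega)
  have h3 : (B j).comp (X + C (i : K)) ∣ (B i).comp (X + C (i : K)) := by
    obtain ⟨c, hc⟩ := hBdvd j i hj (by omega)
    exact ⟨c.comp (X + C (i : K)), by rw [hc, mul_comp]⟩
  exact (h1.of_isCoprime_of_dvd_left h2).of_isCoprime_of_dvd_right h3
end

section
/- Let a(n)/b(n) be a reduced rational representation (gcd(a,b)=1) over a field K of characteristic zero, N = dis(a(n-1), b(n)) ≥ 0, and let A₀, B₀, d₀, ..., d_N be produced by Abramov's algorithm applied with A_{N+1}(n) = a(n-1), B_{N+1}(n) = b(n). Let G(n) = ∏_{i=0}^{N} [d_i(n)]^{\underline{i+1}}. Then a(n)/b(n) = (G(n+1)/G(n)) · (A₀(n+1)/B₀(n)) with gcd(A₀(n+1), B₀(n+h)) = 1 for all h ≥ 0; i.e., Abramov's algorithm yields a Gosper representation of a(n)/b(n). -/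
open Polynomial Finset

/-!
Each pass of Abramov's loop removes `d_i = gcd(A_{i+1}(n), B_{i+1}(n+i))` from `A` and
`d_i(n-i)` from `B`, after which `A_i(n)` and `B_i(n+i)` are coprime. As `A₀ ∣ A_i` and
`B₀ ∣ B_i`, this gives `gcd(A₀(n), B₀(n+h)) = 1` for `h ≤ N`, and the choice of `N` as the
dispersion covers `h > N`; shifting by one yields the claim for `h ≥ 1`, while `h = 0` is
`gcd(a, b) = 1`. The identity comes from `a(n) = ∏ d_i(n+1) · A₀(n+1)`,
`b(n) = ∏ d_i(n-i) · B₀(n)` and the telescoping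
`d(n+1) · [d(n)]^{\underline{i+1}} = d(n-i) · [d(n+1)]^{\underline{i+1}}`.
-/

theorem eq_prod_range_mul_of_succ_eq_mul {M : Type*} [CommMonoid M] {f g : ℕ → M} {n : ℕ}
    (h : ∀ i < n, f (i + 1) = g i * f i) : f n = (∏ i ∈ range n, g i) * f 0 := by
  induction n with
  | zero => simp
  | succ n ih =>
    rw [h n n.lt_succ_self, ih fun i hi => h i (by omega), prod_range_succ]
    ac_rfl

theorem dvd_of_succ_eq_mul {M : Type*} [CommMonoid M] {f g : ℕ → M} {n : ℕ}
    (h : ∀ i < n, f (i + 1) = g i * f i) : f 0 ∣ f n :=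
  Dvd.intro_left _ (eq_prod_range_mul_of_succ_eq_mul h).symm

theorem isCoprime_of_gcd_mul_mul_eq {R : Type*} [CommRing R] [IsDomain R] [IsBezout R]
    [GCDMonoid R] {d x y : R} (hd : d ≠ 0) (h : gcd (d * x) (d * y) = d) : IsCoprime x y := by
  have hassoc : Associated (d * gcd x y) (d * 1) := by
    simpa [h] using (gcd_mul_left' d x y).symm
  exact (gcd_isUnit_iff x y).mp
    (associated_one_iff_isUnit.mp (hassoc.of_mul_left (Associated.refl d) hd))

namespace Polynomial

variable {R : Type*} [CommRing R]

theorem comp_X_add_C_comp_X_add_C (p : R[X]) (a b : R) :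
    (p.comp (X + C a)).comp (X + C b) = p.comp (X + C (a + b)) := by
  rw [comp_assoc, add_comp, X_comp, C_comp, C_add]
  ring_nf

theorem comp_X_sub_C_comp_X_add_C (p : R[X]) (a : R) :
    (p.comp (X - C a)).comp (X + C a) = p := by
  simp [comp_assoc]

/-- The falling factorial `[p(n)]^{\underline{k}} = p(n) p(n-1) ⋯ p(n-k+1)`. -/
noncomputable def descFactorial (p : R[X]) (k : ℕ) : R[X] :=
  ∏ j ∈ range k, p.comp (X - C (j : R))

theorem descFactorial_succ (p : R[X]) (k : ℕ) :
    p.descFactorial (k + 1) = p.descFactorial k * p.comp (X - C (k : R)) :=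
  prod_range_succ _ _

theorem descFactorial_succ_comp_X_add_one (p : R[X]) (k : ℕ) :
    (p.descFactorial (k + 1)).comp (X + 1) = p.comp (X + 1) * p.descFactorial k := by
  have shift : ∀ j : ℕ,
      (p.comp (X - C (j : R))).comp (X + 1) = p.comp (X + C (1 - (j : R))) := by
    intro j
    rw [comp_assoc, sub_comp, X_comp, C_comp, C_sub, C_1]
    ring_nf
  rw [descFactorial, descFactorial, Polynomial.prod_comp, prod_congr rfl fun j _ => shift j,
    prod_range_succ', mul_comm]
  congr 1
  · simp
  · refine prod_congr rfl fun j _ => ?_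
    rw [sub_eq_add_neg X, ← C_neg, Nat.cast_succ]
    ring_nf

theorem comp_X_add_one_mul_descFactorial_succ (p : R[X]) (k : ℕ) :
    p.comp (X + 1) * p.descFactorial (k + 1) =
      p.comp (X - C (k : R)) * (p.descFactorial (k + 1)).comp (X + 1) := by
  rw [descFactorial_succ_comp_X_add_one, descFactorial_succ]
  ring

theorem prod_comp_X_add_one_mul_prod_descFactorial (s : Finset ℕ) (d : ℕ → R[X]) :
    (∏ i ∈ s, (d i).comp (X + 1)) * ∏ i ∈ s, (d i).descFactorial (i + 1) =
      (∏ i ∈ s, (d i).comp (X - C (i : R))) *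
        (∏ i ∈ s, (d i).descFactorial (i + 1)).comp (X + 1) := by
  rw [Polynomial.prod_comp, ← prod_mul_distrib, ← prod_mul_distrib]
  exact prod_congr rfl fun i _ => comp_X_add_one_mul_descFactorial_succ (d i) i

end Polynomial

namespace Abramov

variable {K : Type*} [Field K] [DecidableEq K] {A B d : ℕ → K[X]} {i : ℕ}

theorem isCoprime_of_step (hdi : d i ≠ 0)
    (hd : d i = gcd (A (i + 1)) ((B (i + 1)).comp (X + C (i : K))))
    (hA : A (i + 1) = d i * A i) (hB : B (i + 1) = (d i).comp (X - C (i : K)) * B i) :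
    IsCoprime (A i) ((B i).comp (X + C (i : K))) := by
  rw [hA, hB, mul_comp, comp_X_sub_C_comp_X_add_C] at hd
  exact isCoprime_of_gcd_mul_mul_eq hdi hd.symm

theorem isCoprime_zero_comp_X_add_C {N : ℕ} (hdd : ∀ i ≤ N, d i ≠ 0)
    (hd : ∀ i ≤ N, d i = gcd (A (i + 1)) ((B (i + 1)).comp (X + C (i : K))))
    (hA : ∀ i ≤ N, A (i + 1) = d i * A i)
    (hB : ∀ i ≤ N, B (i + 1) = (d i).comp (X - C (i : K)) * B i)
    (hcop : ∀ k : ℕ, N < k → IsCoprime (A (N + 1)) ((B (N + 1)).comp (X + C (k : K))))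
    (m : ℕ) : IsCoprime (A 0) ((B 0).comp (X + C (m : K))) := by
  suffices ∃ k ≤ N + 1, IsCoprime (A k) ((B k).comp (X + C (m : K))) by
    obtain ⟨k, hk, hcopk⟩ := this
    have hAk : A 0 ∣ A k := dvd_of_succ_eq_mul fun i hi => hA i (by omega)
    have hBk : B 0 ∣ B k := dvd_of_succ_eq_mul fun i hi => hB i (by omega)
    exact (hcopk.of_isCoprime_of_dvd_left hAk).of_isCoprime_of_dvd_right
      (map_dvd (compRingHom _) hBk)
  rcases le_or_gt m N with hm | hm
  · exact ⟨m, by omega, isCoprime_of_step (hdd m hm) (hd m hm) (hA m hm) (hB m hm)⟩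
  · exact ⟨N + 1, le_rfl, hcop m hm⟩

end Abramov

theorem abramov_gosper_representation_general {K : Type*} [Field K] [DecidableEq K]
    (a b : K[X]) (hb : b ≠ 0) (hab : IsCoprime a b) (N : ℕ)
    (hcop : ∀ k : ℕ, N < k → IsCoprime (a.comp (X - 1)) (b.comp (X + C (k : K))))
    (A B dd : ℕ → K[X])
    (hA : A (N + 1) = a.comp (X - 1))
    (hB : B (N + 1) = b)
    (hd : ∀ i ≤ N, dd i = gcd (A (i + 1)) ((B (i + 1)).comp (X + C (i : K))))
    (hAi : ∀ i ≤ N, A (i + 1) = dd i * A i)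
    (hBi : ∀ i ≤ N, B (i + 1) = (dd i).comp (X - C (i : K)) * B i)
    (G : K[X])
    (hG : G = ∏ i ∈ range (N + 1), ∏ j ∈ range (i + 1), (dd i).comp (X - C (j : K))) :
    a * G * B 0 = b * G.comp (X + 1) * (A 0).comp (X + 1) ∧
      ∀ h : ℕ, IsCoprime ((A 0).comp (X + 1)) ((B 0).comp (X + C (h : K))) := by
  have hAfac : a.comp (X - 1) = (∏ i ∈ range (N + 1), dd i) * A 0 :=
    hA ▸ eq_prod_range_mul_of_succ_eq_mul fun i hi => hAi i (by omega)
  have hbfac : b = (∏ i ∈ range (N + 1), (dd i).comp (X - C (i : K))) * B 0 :=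
    hB ▸ eq_prod_range_mul_of_succ_eq_mul fun i hi => hBi i (by omega)
  have hafac : a = (∏ i ∈ range (N + 1), (dd i).comp (X + 1)) * (A 0).comp (X + 1) := by
    have hunshift : (a.comp (X - 1)).comp (X + 1) = a := by
      simpa using comp_X_sub_C_comp_X_add_C a 1
    rw [← hunshift, hAfac, mul_comp, Polynomial.prod_comp]
  have hdd : ∀ i ≤ N, dd i ≠ 0 := by
    intro i hi hi0
    refine hb (hbfac.trans ?_)
    rw [prod_eq_zero (mem_range.2 (by omega : i < N + 1)) (by rw [hi0, zero_comp]), zero_mul]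
  have hG' : G = ∏ i ∈ range (N + 1), (dd i).descFactorial (i + 1) := hG
  refine ⟨?_, ?_⟩
  · rw [hG', hafac, hbfac]
    linear_combination ((A 0).comp (X + 1) * B 0) *
      prod_comp_X_add_one_mul_prod_descFactorial (range (N + 1)) dd
  · rintro (_ | m)
    · have hcop0 := hab.of_isCoprime_of_dvd_left (Dvd.intro_left _ hafac.symm)
      simpa using hcop0.of_isCoprime_of_dvd_right (Dvd.intro_left _ hbfac.symm)
    · have hcopm := Abramov.isCoprime_zero_comp_X_add_C hdd hd hAi hBi
        (fun k hk => by rw [hA, hB]; exact hcop k hk) m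
      have h := hcopm.map (compRingHom (X + C 1))
      rw [coe_compRingHom_apply, coe_compRingHom_apply, comp_X_add_C_comp_X_add_C, C_1] at h
      rwa [Nat.cast_succ]

/-- Abramov's algorithm yields a Gosper representation:
`a(n)/b(n) = (G(n+1)/G(n))·(A₀(n+1)/B₀(n))` with
`gcd(A₀(n+1), B₀(n+h)) = 1` for all `h ≥ 0`. -/
theorem abramov_gosper_representation {K : Type*} [Field K] [CharZero K] [DecidableEq K]
    (a b : K[X]) (ha : a ≠ 0) (hb : b ≠ 0) (hab : IsCoprime a b) (N : ℕ)
    (hmax : 0 < (gcd (a.comp (X - 1)) (b.comp (X + C (N : K)))).degree)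
    (hcop : ∀ k : ℕ, N < k → IsCoprime (a.comp (X - 1)) (b.comp (X + C (k : K))))
    (A B dd : ℕ → K[X])
    (hA : A (N + 1) = a.comp (X - 1))
    (hB : B (N + 1) = b)
    (hd : ∀ i ≤ N, dd i = gcd (A (i + 1)) ((B (i + 1)).comp (X + C (i : K))))
    (hAi : ∀ i ≤ N, A (i + 1) = dd i * A i)
    (hBi : ∀ i ≤ N, B (i + 1) = (dd i).comp (X - C (i : K)) * B i)
    (G : K[X])
    (hG : G = ∏ i ∈ range (N + 1), ∏ j ∈ range (i + 1), (dd i).comp (X - C (j : K))) :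
    a * G * B 0 = b * G.comp (X + 1) * (A 0).comp (X + 1) ∧
      ∀ h : ℕ, IsCoprime ((A 0).comp (X + 1)) ((B 0).comp (X + C (h : K))) :=
  abramov_gosper_representation_general a b hb hab N hcop A B dd hA hB hd hAi hBi G hG
end

section
/- Let a, b be coprime nonzero polynomials over K, characteristic zero, with N = dis(a(n-1), b(n)) ≥ 0. With A_i, B_i as in Abramov's algorithm starting from A_{N+1}(n) = a(n-1), B_{N+1}(n) = b(n), the factorizations a(n) = d₀(n+1)d₁(n+1)···d_N(n+1)·A₀(n+1) and b(n) = d₀(n)d₁(n-1)···d_N(n-N)·B₀(n) hold (up to the sign/normalization convention of the algorithm). -/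
open Polynomial Finset

/-- Formulas (3.12) and (3.13): iterating Abramov's recursion factorizes
`a(n) = d₀(n+1)⋯d_N(n+1)·A₀(n+1)` and `b(n) = d₀(n)d₁(n-1)⋯d_N(n-N)·B₀(n)`. -/
theorem abramov_factorizations {K : Type*} [Field K] [CharZero K] [DecidableEq K]
    (a b : K[X]) (ha : a ≠ 0) (hb : b ≠ 0) (hab : IsCoprime a b) (N : ℕ)
    (hmax : 0 < (gcd (a.comp (X - 1)) (b.comp (X + C (N : K)))).degree)
    (hcop : ∀ k : ℕ, N < k → IsCoprime (a.comp (X - 1)) (b.comp (X + C (k : K))))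
    (A B dd : ℕ → K[X])
    (hA : A (N + 1) = a.comp (X - 1))
    (hB : B (N + 1) = b)
    (hd : ∀ i ≤ N, dd i = gcd (A (i + 1)) ((B (i + 1)).comp (X + C (i : K))))
    (hAi : ∀ i ≤ N, A (i + 1) = dd i * A i)
    (hBi : ∀ i ≤ N, B (i + 1) = (dd i).comp (X - C (i : K)) * B i) :
    a = (∏ i ∈ range (N + 1), (dd i).comp (X + 1)) * (A 0).comp (X + 1) ∧
      b = (∏ i ∈ range (N + 1), (dd i).comp (X - C (i : K))) * B 0 := by
  have key : ∀ m, m ≤ N + 1 → A m = (∏ i ∈ range m, dd i) * A 0 ∧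
      B m = (∏ i ∈ range m, (dd i).comp (X - C (i : K))) * B 0 := by
    intro m hm
    induction m with
    | zero => simp
    | succ k ih =>
        have hk : k ≤ N := Nat.lt_succ_iff.mp hm
        obtain ⟨h1, h2⟩ := ih (le_of_lt hm)
        constructor
        · rw [hAi k hk, h1, prod_range_succ]; ring
        · rw [hBi k hk, h2, prod_range_succ]; ring
  obtain ⟨h1, h2⟩ := key (N + 1) le_rfl
  rw [hA] at h1
  rw [hB] at h2
  refine ⟨?_, h2⟩
  have := congrArg (fun p => p.comp (X + 1)) h1
  simp only [mul_comp, comp_assoc] at this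
  have hX : (X - 1 : K[X]).comp (X + 1) = X := by
    simp [sub_comp, add_comp]
  rw [hX, comp_X] at this
  rw [this]
  congr 1
  rw [Polynomial.prod_comp]
end
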